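/- arXiv:2108.05668 — 5 statements merged into one kernel-verified Lean document; each statement's English description precedes it below -/
import Mathlib

section
/- Let (κ, k) be a Sonine pair from the class L₁, let n ≥ 1, and let f be a function of the form f(t) = t^r f₁(t) with r > −1 and f₁ continuous on [0,∞). Then the n-fold sequential general fractional derivative of Riemann–Liouville type is a left inverse of the n-fold general fractional integral: for all t > 0, (𝔻_{(k)}^{⟨n⟩} (κ^{⟨n⟩} ∗ f))(t) = f(t), where 𝔻_{(k)}^{⟨n⟩} is the n-fold iterate of the operator g ↦ d/dt (k ∗ g) and each of the n differentiations exists at every t > 0. -/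
/-- The Laplace convolution `(f ∗ g)(t) = ∫_0^t f(t−τ) g(τ) dτ`. -/
noncomputable def lconv (f g : ℝ → ℝ) : ℝ → ℝ :=
  fun t => ∫ τ in (0:ℝ)..t, f (t - τ) * g τ

/-- `convNPow f j` is the `(j+1)`-st convolution power `f^{⟨j+1⟩}`
(so `convNPow f 0 = f^{⟨1⟩} = f`). -/
noncomputable def convNPow (f : ℝ → ℝ) : ℕ → ℝ → ℝ
  | 0 => f
  | j + 1 => lconv f (convNPow f j)

/-- The power series `Σ a_j z^j` has a positive radius of convergence. -/
def PosRadius (a : ℕ → ℝ) : Prop :=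
  ∃ r : ℝ, 0 < r ∧ Summable fun j => |a j| * r ^ j

/-- Membership in the space `C_{−1}(0,∞)`:
`f(t) = t^r f₁(t)` with `r > −1` and `f₁` continuous on `[0,∞)`. -/
def InCm1 (f : ℝ → ℝ) : Prop :=
  ∃ (r : ℝ) (f₁ : ℝ → ℝ), -1 < r ∧ ContinuousOn f₁ (Set.Ici (0:ℝ)) ∧
    ∀ t, 0 < t → f t = t ^ r * f₁ t

/-- `(κ, k)` is a Sonine pair from the class `L₁`. -/
def SoninePairL1 (κ k : ℝ → ℝ) : Prop :=
  (∃ (p : ℝ) (κ₁ : ℝ → ℝ), 0 < p ∧ p < 1 ∧ ContinuousOn κ₁ (Set.Ici (0:ℝ)) ∧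
      ∀ t, 0 < t → κ t = t ^ (p - 1) * κ₁ t) ∧
  (∃ (q : ℝ) (k₁ : ℝ → ℝ), 0 < q ∧ q < 1 ∧ ContinuousOn k₁ (Set.Ici (0:ℝ)) ∧
      ∀ t, 0 < t → k t = t ^ (q - 1) * k₁ t) ∧
  (∀ t, 0 < t → lconv κ k t = 1)

/-- The general fractional derivative of Riemann–Liouville type:
`(𝔻_{(k)} f)(t) = d/dt (k ∗ f)(t)`. -/
noncomputable def gfdRL (k : ℝ → ℝ) (f : ℝ → ℝ) : ℝ → ℝ :=
  deriv (lconv k f)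

/-- The general fractional derivative of Caputo type:
`(∗𝔻_{(k)} g)(t) = d/dt (k ∗ g)(t) − g(0+) k(t)` where `g(0+)` is the limit of `g` at `0` from
the right. -/
noncomputable def gfdC (k : ℝ → ℝ) (g : ℝ → ℝ) : ℝ → ℝ :=
  fun t => deriv (lconv k g) t - (Filter.limUnder (nhdsWithin 0 (Set.Ioi 0)) g) * k t

section FFTRLHelpers

open MeasureTheory Set intervalIntegral Filter

private lemma contPlus {f₁ : ℝ → ℝ} (h : ContinuousOn f₁ (Ici 0)) :
    Continuous fun x : ℝ => f₁ (max x 0) :=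
  h.comp_continuous (continuous_id.max continuous_const) fun x => le_max_right x 0

private lemma exists_bound (g : ℝ → ℝ) (hg : Continuous g) (D : ℝ) :
    ∃ C, 0 ≤ C ∧ ∀ x : ℝ, |x| ≤ D → |g x| ≤ C := by
  obtain ⟨C, hC⟩ := (isCompact_Icc (a := -D) (b := D)).exists_bound_of_continuousOn hg.continuousOn
  refine ⟨max C 0, le_max_right _ _, fun x hx => ?_⟩
  have h2 := hC x ⟨neg_le.mp (neg_le.mpr (abs_le.1 hx).1), (abs_le.1 hx).2⟩
  calc |g x| = ‖g x‖ := rfl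
  _ ≤ C := h2
  _ ≤ max C 0 := le_max_left _ _

private lemma powint {a b : ℝ} (ha : -1 < a) (hb : -1 < b) {t : ℝ} (ht : 0 < t) :
    IntervalIntegrable (fun τ => (t - τ) ^ a * τ ^ b) volume 0 t := by
  have h1 : IntervalIntegrable (fun τ => (t - τ) ^ a * τ ^ b) volume 0 (t/2) := by
    refine IntervalIntegrable.continuousOn_mul (intervalIntegrable_rpow' hb) ?_
    refine ContinuousOn.rpow_const (by fun_prop) fun x hx => Or.inl ?_
    rw [uIcc_of_le (by linarith)] at hx
    have : x ≤ t/2 := hx.2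
    have : 0 < t - x := by linarith
    exact this.ne'
  have h2 : IntervalIntegrable (fun τ => (t - τ) ^ a * τ ^ b) volume (t/2) t := by
    have base : IntervalIntegrable (fun u : ℝ => u ^ a) volume 0 (t/2) :=
      intervalIntegrable_rpow' ha
    have comp := base.comp_sub_left t
    have comp' : IntervalIntegrable (fun τ => (t - τ) ^ a) volume (t/2) t := by
      have e1 : t - 0 = t := by ring
      have e2 : t - t/2 = t/2 := by ring
      rw [e1, e2] at comp
      exact comp.symm
    refine comp'.mul_continuousOn ?_
    refine ContinuousOn.rpow_const (by fun_prop) fun x hx => Or.inl ?_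
    rw [uIcc_of_le (by linarith)] at hx
    have : t/2 ≤ x := hx.1
    have : 0 < x := by linarith
    exact this.ne'
  exact h1.trans h2

private lemma subst_mul (φ : ℝ → ℝ) {t : ℝ} (ht : 0 < t) :
    ∫ τ in (0:ℝ)..t, φ τ = t * ∫ s in (0:ℝ)..1, φ (t * s) := by
  rw [intervalIntegral.integral_comp_mul_left φ ht.ne', mul_zero, mul_one, smul_eq_mul]
  field_simp

private lemma lconv_scale {a b : ℝ} (F G : ℝ → ℝ) {t : ℝ} (ht : 0 < t) :
    (∫ τ in (0:ℝ)..t, ((t - τ) ^ a * F (t - τ)) * (τ ^ b * G τ))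
      = t ^ (a + b + 1) *
        ∫ s in (0:ℝ)..1, ((1 - s) ^ a * s ^ b) * (F (t * (1 - s)) * G (t * s)) := by
  rw [subst_mul _ ht]
  have key : EqOn (fun s : ℝ => ((t - t * s) ^ a * F (t - t * s)) * ((t * s) ^ b * G (t * s)))
      (fun s : ℝ => (t ^ a * t ^ b) * (((1 - s) ^ a * s ^ b) * (F (t * (1 - s)) * G (t * s))))
      (uIcc 0 1) := by
    intro s hs
    rw [uIcc_of_le zero_le_one] at hs
    have h1 : t - t * s = t * (1 - s) := by ring
    have h2 : (t * (1 - s)) ^ a = t ^ a * (1 - s) ^ a :=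
      Real.mul_rpow ht.le (by linarith [hs.2])
    have h3 : (t * s) ^ b = t ^ b * s ^ b := Real.mul_rpow ht.le hs.1
    simp only [h1, h2, h3]
    ring
  rw [intervalIntegral.integral_congr key, intervalIntegral.integral_const_mul]
  rw [Real.rpow_add ht, Real.rpow_add ht, Real.rpow_one]
  ring

private lemma contH {a b : ℝ} (ha : -1 < a) (hb : -1 < b) {F G : ℝ → ℝ}
    (hF : Continuous F) (hG : Continuous G) :
    Continuous fun x : ℝ =>
      ∫ s in (0:ℝ)..1, ((1 - s) ^ a * s ^ b) * (F (x * (1 - s)) * G (x * s)) := by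
  rw [continuous_iff_continuousAt]
  intro x₀
  obtain ⟨CF, hCF0, hCF⟩ := exists_bound F hF (|x₀| + 1)
  obtain ⟨CG, hCG0, hCG⟩ := exists_bound G hG (|x₀| + 1)
  refine intervalIntegral.continuousAt_of_dominated_interval
    (F := fun x s => ((1 - s) ^ a * s ^ b) * (F (x * (1 - s)) * G (x * s)))
    (bound := fun s => (CF * CG) * ((1 - s) ^ a * s ^ b)) ?_ ?_ ?_ ?_
  · exact Eventually.of_forall fun x => (Measurable.aestronglyMeasurable (by fun_prop))
  · have hball : Metric.ball x₀ 1 ∈ nhds x₀ := Metric.ball_mem_nhds _ one_pos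
    filter_upwards [hball] with x hx
    refine Eventually.of_forall fun s hs => ?_
    rw [uIoc_of_le zero_le_one] at hs
    have hs0 : 0 ≤ s := hs.1.le
    have hs1 : s ≤ 1 := hs.2
    have hxb : |x| ≤ |x₀| + 1 := by
      have := abs_sub_abs_le_abs_sub x x₀
      have hd : |x - x₀| < 1 := by simpa [Real.dist_eq] using hx
      linarith
    have h1 : |x * (1 - s)| ≤ |x₀| + 1 := by
      rw [abs_mul]
      calc |x| * |1 - s| ≤ (|x₀| + 1) * 1 := by
            apply mul_le_mul hxb _ (abs_nonneg _) (by positivity)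
            rw [abs_of_nonneg (by linarith)]; linarith
      _ = |x₀| + 1 := mul_one _
    have h2 : |x * s| ≤ |x₀| + 1 := by
      rw [abs_mul]
      calc |x| * |s| ≤ (|x₀| + 1) * 1 := by
            apply mul_le_mul hxb _ (abs_nonneg _) (by positivity)
            rw [abs_of_nonneg hs0]; linarith
      _ = |x₀| + 1 := mul_one _
    have hp1 : (0:ℝ) ≤ (1 - s) ^ a := Real.rpow_nonneg (by linarith) _
    have hp2 : (0:ℝ) ≤ s ^ b := Real.rpow_nonneg hs0 _
    rw [Real.norm_eq_abs, abs_mul, abs_mul, abs_mul]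
    rw [abs_of_nonneg hp1, abs_of_nonneg hp2]
    calc (1 - s) ^ a * s ^ b * (|F (x * (1 - s))| * |G (x * s)|)
        ≤ (1 - s) ^ a * s ^ b * (CF * CG) := by
          apply mul_le_mul_of_nonneg_left _ (by positivity)
          exact mul_le_mul (hCF _ h1) (hCG _ h2) (abs_nonneg _) hCF0
    _ = CF * CG * ((1 - s) ^ a * s ^ b) := by ring
  · exact (powint ha hb one_pos).const_mul _
  · refine Eventually.of_forall fun s _hs => ?_
    exact ContinuousAt.mul continuousAt_const (ContinuousAt.mul
      ((hF.comp (by fun_prop)).continuousAt) ((hG.comp (by fun_prop)).continuousAt))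

private lemma InCm1.model {f : ℝ → ℝ} (hf : InCm1 f) :
    ∃ (r : ℝ) (F : ℝ → ℝ), -1 < r ∧ Continuous F ∧
      ∀ t, 0 < t → f t = t ^ r * F t := by
  obtain ⟨r, f₁, hr, hf₁, hfe⟩ := hf
  refine ⟨r, fun x => f₁ (max x 0), hr, contPlus hf₁, fun t ht => ?_⟩
  show f t = t ^ r * f₁ (max t 0)
  rw [max_eq_left ht.le]
  exact hfe t ht

private lemma InCm1.continuousAt {f : ℝ → ℝ} (hf : InCm1 f) {t : ℝ} (ht : 0 < t) :
    ContinuousAt f t := by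
  obtain ⟨r, F, hr, hF, hfe⟩ := hf.model
  have hc : ContinuousAt (fun x : ℝ => x ^ r * F x) t :=
    (Real.continuousAt_rpow_const t r (Or.inl ht.ne')).mul hF.continuousAt
  refine hc.congr ?_
  filter_upwards [Ioi_mem_nhds ht] with x hx
  exact (hfe x hx).symm

private lemma InCm1.intervalIntegrable {f : ℝ → ℝ} (hf : InCm1 f) {t : ℝ} (ht : 0 < t) :
    IntervalIntegrable f volume 0 t := by
  obtain ⟨r, F, hr, hF, hfe⟩ := hf.model
  have hm : IntervalIntegrable (fun x : ℝ => x ^ r * F x) volume 0 t :=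
    (intervalIntegrable_rpow' hr).mul_continuousOn hF.continuousOn
  rw [intervalIntegrable_iff, uIoc_of_le ht.le] at hm ⊢
  exact hm.congr_fun (fun x hx => (hfe x hx.1).symm) measurableSet_Ioc

private lemma InCm1.aesm_Ioi {f : ℝ → ℝ} (hf : InCm1 f) :
    AEStronglyMeasurable f (volume.restrict (Ioi (0:ℝ))) := by
  obtain ⟨r, F, hr, hF, hfe⟩ := hf.model
  have hm : AEStronglyMeasurable (fun x : ℝ => x ^ r * F x)
      (volume.restrict (Ioi (0:ℝ))) := Measurable.aestronglyMeasurable (by fun_prop)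
  refine hm.congr ?_
  rw [Filter.EventuallyEq, ae_restrict_iff' measurableSet_Ioi]
  exact Eventually.of_forall fun x hx => (hfe x hx).symm

private lemma lconv_congr_right {k g₁ g₂ : ℝ → ℝ} (h : ∀ x, 0 < x → g₁ x = g₂ x) {t : ℝ}
    (ht : 0 < t) : lconv k g₁ t = lconv k g₂ t := by
  unfold lconv
  rw [integral_of_le ht.le, integral_of_le ht.le, integral_Ioc_eq_integral_Ioo,
      integral_Ioc_eq_integral_Ioo]
  exact setIntegral_congr_fun measurableSet_Ioo fun τ hτ => by rw [h τ hτ.1]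

private lemma lconv_comm (f g : ℝ → ℝ) (t : ℝ) : lconv f g t = lconv g f t := by
  unfold lconv
  have h := intervalIntegral.integral_comp_sub_left (a := 0) (b := t)
    (fun y => f y * g (t - y)) t
  simp only [sub_sub_cancel, sub_zero, sub_self] at h
  rw [h]
  exact intervalIntegral.integral_congr fun x _ => mul_comm _ _

private lemma InCm1.lconv_mem {f g : ℝ → ℝ} (hf : InCm1 f) (hg : InCm1 g) :
    InCm1 (lconv f g) := by
  obtain ⟨a, F, ha, hF, hfe⟩ := hf.model
  obtain ⟨b, G, hb, hG, hge⟩ := hg.model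
  refine ⟨a + b + 1,
    fun x => ∫ s in (0:ℝ)..1, ((1 - s) ^ a * s ^ b) * (F (x * (1 - s)) * G (x * s)),
    by linarith, (contH ha hb hF hG).continuousOn, fun t ht => ?_⟩
  have step1 : lconv f g t = ∫ τ in (0:ℝ)..t, ((t - τ) ^ a * F (t - τ)) * (τ ^ b * G τ) := by
    unfold lconv
    rw [integral_of_le ht.le, integral_of_le ht.le, integral_Ioc_eq_integral_Ioo,
        integral_Ioc_eq_integral_Ioo]
    refine setIntegral_congr_fun measurableSet_Ioo fun τ hτ => ?_
    have h1 : 0 < t - τ := sub_pos.mpr hτ.2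
    rw [hfe _ h1, hge _ hτ.1]
  rw [step1, lconv_scale F G ht]

private lemma beta_eval {b c : ℝ} (hb : -1 < b) (hc : -1 < c) {τ : ℝ} (hτ : 0 < τ) :
    ∫ σ in Ioo (0:ℝ) τ, (τ - σ) ^ b * σ ^ c
      = τ ^ (b + c + 1) * ∫ s in (0:ℝ)..1, (1 - s) ^ b * s ^ c := by
  rw [← integral_Ioc_eq_integral_Ioo, ← integral_of_le hτ.le]
  have h := lconv_scale (a := b) (b := c) (fun _ => 1) (fun _ => 1) hτ
  simpa using h

private lemma pint2 {b c : ℝ} (hb : -1 < b) (hc : -1 < c) {τ : ℝ} (hτ : 0 < τ)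
    (G H : ℝ → ℝ) (hG : Continuous G) (hH : Continuous H) :
    IntervalIntegrable (fun σ => ((τ - σ) ^ b * G (τ - σ)) * (σ ^ c * H σ)) volume 0 τ := by
  obtain ⟨CG, hCG0, hCG⟩ := exists_bound G hG τ
  obtain ⟨CH, hCH0, hCH⟩ := exists_bound H hH τ
  refine IntervalIntegrable.mono_fun ((powint hb hc hτ).const_mul (CG * CH))
    (Measurable.aestronglyMeasurable (by fun_prop)) ?_
  rw [Filter.EventuallyLE, ae_restrict_iff' measurableSet_uIoc]
  refine Eventually.of_forall fun σ hσ => ?_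
  rw [uIoc_of_le hτ.le] at hσ
  have h1 : (0:ℝ) ≤ τ - σ := by linarith [hσ.2]
  have h2 : (0:ℝ) ≤ σ := hσ.1.le
  have hb1 : |G (τ - σ)| ≤ CG := hCG _ (by rw [abs_of_nonneg h1]; linarith [hσ.1])
  have hb2 : |H σ| ≤ CH := hCH _ (by rw [abs_of_nonneg h2]; linarith [hσ.2])
  have hp1 : (0:ℝ) ≤ (τ - σ) ^ b := Real.rpow_nonneg h1 _
  have hp2 : (0:ℝ) ≤ σ ^ c := Real.rpow_nonneg h2 _
  simp only [Real.norm_eq_abs, abs_mul, abs_of_nonneg hp1, abs_of_nonneg hp2]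
  calc (τ - σ) ^ b * |G (τ - σ)| * (σ ^ c * |H σ|)
      ≤ (τ - σ) ^ b * CG * (σ ^ c * CH) := by
        apply mul_le_mul
        · exact mul_le_mul_of_nonneg_left hb1 hp1
        · exact mul_le_mul_of_nonneg_left hb2 hp2
        · positivity
        · positivity
  _ ≤ |CG| * |CH| * ((τ - σ) ^ b * σ ^ c) :=
        le_of_eq (by rw [abs_of_nonneg hCG0, abs_of_nonneg hCH0]; ring)

private lemma lconv_assoc {f g h : ℝ → ℝ} (hf : InCm1 f) (hg : InCm1 g) (hh : InCm1 h)
    {t : ℝ} (ht : 0 < t) : lconv f (lconv g h) t = lconv (lconv f g) h t := by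
  classical
  obtain ⟨a, F, ha, hF, hfe⟩ := hf.model
  obtain ⟨b, G, hb, hG, hge⟩ := hg.model
  obtain ⟨c, H, hc, hHc, hhe⟩ := hh.model
  set Φ : ℝ × ℝ → ℝ := fun p =>
    ((t - p.1) ^ a * F (t - p.1)) *
      (((p.1 - p.2) ^ b * G (p.1 - p.2)) * (p.2 ^ c * H p.2)) with hΦdef
  set S : Set (ℝ × ℝ) := {p | p.2 < p.1} with hSdef
  have hSmeas : MeasurableSet S := (isOpen_lt continuous_snd continuous_fst).measurableSet
  have hΦm : Measurable Φ := by fun_prop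
  have hFm : Measurable (S.indicator Φ) := hΦm.indicator hSmeas
  -- slice descriptions
  have slice_eq : ∀ τ : ℝ,
      (fun σ => S.indicator Φ (τ, σ)) = (Iio τ).indicator fun σ => Φ (τ, σ) := by
    intro τ; funext σ
    by_cases hστ : σ < τ
    · rw [indicator_of_mem (show (τ, σ) ∈ S from hστ), indicator_of_mem (mem_Iio.mpr hστ)]
    · rw [indicator_of_notMem (show (τ, σ) ∉ S from hστ),
        indicator_of_notMem (by simpa using hστ)]
  have slice_eq2 : ∀ σ : ℝ,
      (fun τ => S.indicator Φ (τ, σ)) = (Ioi σ).indicator fun τ => Φ (τ, σ) := by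
    intro σ; funext τ
    by_cases hστ : σ < τ
    · rw [indicator_of_mem (show (τ, σ) ∈ S from hστ), indicator_of_mem (mem_Ioi.mpr hστ)]
    · rw [indicator_of_notMem (show (τ, σ) ∉ S from hστ),
        indicator_of_notMem (by simpa using hστ)]
  have set1 : ∀ τ ∈ Ioo (0:ℝ) t, Ioo (0:ℝ) t ∩ Iio τ = Ioo 0 τ := by
    intro τ hτ; ext x
    simp only [mem_inter_iff, mem_Ioo, mem_Iio]
    exact ⟨fun ⟨⟨h1, _⟩, h3⟩ => ⟨h1, h3⟩, fun ⟨h1, h2⟩ => ⟨⟨h1, h2.trans hτ.2⟩, h2⟩⟩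
  have set2 : ∀ σ ∈ Ioo (0:ℝ) t, Ioo (0:ℝ) t ∩ Ioi σ = Ioo σ t := by
    intro σ hσ; ext x
    simp only [mem_inter_iff, mem_Ioo, mem_Ioi]
    exact ⟨fun ⟨⟨_, h2⟩, h3⟩ => ⟨h3, h2⟩, fun ⟨h1, h2⟩ => ⟨⟨hσ.1.trans h1, h2⟩, h1⟩⟩
  have slice_int : ∀ τ ∈ Ioo (0:ℝ) t,
      (∫ σ in Ioo (0:ℝ) t, S.indicator Φ (τ, σ)) = ∫ σ in Ioo (0:ℝ) τ, Φ (τ, σ) := by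
    intro τ hτ
    rw [slice_eq τ, setIntegral_indicator measurableSet_Iio, set1 τ hτ]
  -- claim A
  have claimA : ∀ τ ∈ Ioo (0:ℝ) t,
      f (t - τ) * lconv g h τ = ∫ σ in Ioo (0:ℝ) t, S.indicator Φ (τ, σ) := by
    intro τ hτ
    rw [slice_int τ hτ]
    have e1 : lconv g h τ = ∫ σ in Ioo (0:ℝ) τ, g (τ - σ) * h σ := by
      unfold lconv
      rw [integral_of_le hτ.1.le, integral_Ioc_eq_integral_Ioo]
    rw [e1, ← MeasureTheory.integral_const_mul]
    refine setIntegral_congr_fun measurableSet_Ioo fun σ hσ => ?_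
    rw [hfe _ (sub_pos.mpr hτ.2), hge _ (sub_pos.mpr hσ.2), hhe _ hσ.1]
  -- claim B
  have claimB : ∀ σ ∈ Ioo (0:ℝ) t,
      (∫ τ in Ioo (0:ℝ) t, S.indicator Φ (τ, σ)) = lconv f g (t - σ) * h σ := by
    intro σ hσ
    rw [slice_eq2 σ, setIntegral_indicator measurableSet_Ioi, set2 σ hσ]
    have e2 : lconv f g (t - σ) = ∫ τ in σ..t, f (t - τ) * g (τ - σ) := by
      show (∫ u in (0:ℝ)..(t - σ), f (t - σ - u) * g u) = _
      have h3 := intervalIntegral.integral_comp_sub_right (a := σ) (b := t)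
        (fun u => f (t - σ - u) * g u) σ
      rw [sub_self] at h3
      rw [← h3]
      exact intervalIntegral.integral_congr fun τ _ => by
        rw [show t - σ - (τ - σ) = t - τ by ring]
    rw [e2, ← intervalIntegral.integral_mul_const, integral_of_le hσ.2.le,
      integral_Ioc_eq_integral_Ioo]
    refine (setIntegral_congr_fun measurableSet_Ioo fun τ hτ => ?_).symm
    rw [hfe _ (sub_pos.mpr hτ.2), hge _ (sub_pos.mpr hτ.1), hhe _ hσ.1]
    simp only [hΦdef]
    ring
  -- bounds
  obtain ⟨CF, hCF0, hCF⟩ := exists_bound F hF t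
  obtain ⟨CG, hCG0, hCG⟩ := exists_bound G hG t
  obtain ⟨CH, hCH0, hCH⟩ := exists_bound H hHc t
  -- slice integrability
  have slice_integrable : ∀ τ ∈ Ioo (0:ℝ) t,
      Integrable (fun σ => S.indicator Φ (τ, σ)) (volume.restrict (Ioo 0 t)) := by
    intro τ hτ
    rw [slice_eq τ, integrable_indicator_iff measurableSet_Iio, IntegrableOn,
      Measure.restrict_restrict measurableSet_Iio, inter_comm, set1 τ hτ]
    have base : IntervalIntegrable
        (fun σ => ((τ - σ) ^ b * G (τ - σ)) * (σ ^ c * H σ)) volume 0 τ :=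
      pint2 hb hc hτ.1 G H hG hHc
    have base' : IntegrableOn
        (fun σ => ((τ - σ) ^ b * G (τ - σ)) * (σ ^ c * H σ)) (Ioo 0 τ) volume := by
      have := intervalIntegrable_iff.mp base
      rw [uIoc_of_le hτ.1.le] at this
      exact this.mono_set Ioo_subset_Ioc_self
    have := base'.const_mul ((t - τ) ^ a * F (t - τ))
    exact this
  -- integrability of norm integrals
  have Beta_nonneg : (0:ℝ) ≤ ∫ s in (0:ℝ)..1, (1 - s) ^ b * s ^ c := by
    apply intervalIntegral.integral_nonneg zero_le_one
    intro s hs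
    exact mul_nonneg (Real.rpow_nonneg (by linarith [hs.2]) _)
      (Real.rpow_nonneg hs.1 _)
  set Beta : ℝ := ∫ s in (0:ℝ)..1, (1 - s) ^ b * s ^ c with hBeta
  have norm_int : Integrable
      (fun τ => ∫ σ, ‖S.indicator Φ (τ, σ)‖ ∂(volume.restrict (Ioo 0 t)))
      (volume.restrict (Ioo 0 t)) := by
    have haesm : AEStronglyMeasurable
        (fun τ => ∫ σ, ‖S.indicator Φ (τ, σ)‖ ∂(volume.restrict (Ioo 0 t)))
        (volume.restrict (Ioo 0 t)) :=
      (hFm.norm.aestronglyMeasurable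
        (μ := (volume.restrict (Ioo 0 t)).prod (volume.restrict (Ioo 0 t)))).integral_prod_right'
    have bound_int : Integrable
        (fun τ => (CF * (CG * CH * Beta)) * ((t - τ) ^ a * τ ^ (b + c + 1)))
        (volume.restrict (Ioo 0 t)) := by
      have base := intervalIntegrable_iff.mp (powint ha (by linarith : (-1:ℝ) < b + c + 1) ht)
      rw [uIoc_of_le ht.le] at base
      exact (base.mono_set Ioo_subset_Ioc_self).const_mul _
    refine bound_int.mono' haesm ?_
    rw [ae_restrict_iff' measurableSet_Ioo]
    refine Eventually.of_forall fun τ hτ => ?_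
    have hnn : (0:ℝ) ≤ ∫ σ, ‖S.indicator Φ (τ, σ)‖ ∂(volume.restrict (Ioo 0 t)) :=
      integral_nonneg fun σ => norm_nonneg _
    rw [Real.norm_eq_abs, abs_of_nonneg hnn]
    have e3 : (∫ σ, ‖S.indicator Φ (τ, σ)‖ ∂(volume.restrict (Ioo 0 t)))
        = ∫ σ in Ioo (0:ℝ) τ, ‖Φ (τ, σ)‖ := by
      have : (fun σ => ‖S.indicator Φ (τ, σ)‖)
          = (Iio τ).indicator fun σ => ‖Φ (τ, σ)‖ := by
        funext σ
        rw [show ‖S.indicator Φ (τ, σ)‖ = ‖(fun σ => S.indicator Φ (τ, σ)) σ‖ from rfl,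
          slice_eq τ]
        exact norm_indicator_eq_indicator_norm _ _
      rw [this, setIntegral_indicator measurableSet_Iio, set1 τ hτ]
    rw [e3]
    have pbound : ∀ σ ∈ Ioo (0:ℝ) τ, ‖Φ (τ, σ)‖
        ≤ (CF * (t - τ) ^ a) * ((CG * CH) * ((τ - σ) ^ b * σ ^ c)) := by
      intro σ hσ
      have h1 : (0:ℝ) ≤ t - τ := by linarith [hτ.2]
      have h2 : (0:ℝ) ≤ τ - σ := by linarith [hσ.2]
      have h3 : (0:ℝ) ≤ σ := hσ.1.le
      have hbF : |F (t - τ)| ≤ CF := hCF _ (by rw [abs_of_nonneg h1]; linarith [hτ.1])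
      have hbG : |G (τ - σ)| ≤ CG := hCG _
        (by rw [abs_of_nonneg h2]; linarith [hσ.1, hτ.2])
      have hbH : |H σ| ≤ CH := hCH _ (by rw [abs_of_nonneg h3]; linarith [hσ.2, hτ.2])
      have hp1 : (0:ℝ) ≤ (t - τ) ^ a := Real.rpow_nonneg h1 _
      have hp2 : (0:ℝ) ≤ (τ - σ) ^ b := Real.rpow_nonneg h2 _
      have hp3 : (0:ℝ) ≤ σ ^ c := Real.rpow_nonneg h3 _
      simp only [hΦdef, Real.norm_eq_abs, abs_mul, abs_of_nonneg hp1, abs_of_nonneg hp2,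
        abs_of_nonneg hp3]
      calc (t - τ) ^ a * |F (t - τ)| * ((τ - σ) ^ b * |G (τ - σ)| * (σ ^ c * |H σ|))
          ≤ (t - τ) ^ a * CF * ((τ - σ) ^ b * CG * (σ ^ c * CH)) := by
            apply mul_le_mul (mul_le_mul_of_nonneg_left hbF hp1)
            · apply mul_le_mul (mul_le_mul_of_nonneg_left hbG hp2)
                (mul_le_mul_of_nonneg_left hbH hp3) (by positivity) (by positivity)
            · positivity
            · positivity
      _ = (CF * (t - τ) ^ a) * ((CG * CH) * ((τ - σ) ^ b * σ ^ c)) := by ring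
    have int_rhs : IntegrableOn
        (fun σ => (CF * (t - τ) ^ a) * ((CG * CH) * ((τ - σ) ^ b * σ ^ c)))
        (Ioo 0 τ) volume := by
      have base := intervalIntegrable_iff.mp (powint hb hc hτ.1)
      rw [uIoc_of_le hτ.1.le] at base
      exact ((base.mono_set Ioo_subset_Ioc_self).const_mul (CG * CH)).const_mul _
    have int_lhs : IntegrableOn (fun σ => ‖Φ (τ, σ)‖) (Ioo 0 τ) volume := by
      have this1 := slice_integrable τ hτ
      rw [slice_eq τ] at this1
      have this2 := this1.norm
      have h4 : (fun σ => ‖(Iio τ).indicator (fun σ => Φ (τ, σ)) σ‖)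
          = (Iio τ).indicator fun σ => ‖Φ (τ, σ)‖ := by
        funext σ; exact norm_indicator_eq_indicator_norm _ _
      rw [h4, integrable_indicator_iff measurableSet_Iio, IntegrableOn,
        Measure.restrict_restrict measurableSet_Iio, inter_comm, set1 τ hτ] at this2
      exact this2
    calc (∫ σ in Ioo (0:ℝ) τ, ‖Φ (τ, σ)‖)
        ≤ ∫ σ in Ioo (0:ℝ) τ, (CF * (t - τ) ^ a) * ((CG * CH) * ((τ - σ) ^ b * σ ^ c)) :=
          setIntegral_mono_on int_lhs int_rhs measurableSet_Ioo pbound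
    _ = (CF * (t - τ) ^ a) * ((CG * CH) * (τ ^ (b + c + 1) * Beta)) := by
          rw [MeasureTheory.integral_const_mul, MeasureTheory.integral_const_mul, beta_eval hb hc hτ.1]
    _ ≤ (CF * (CG * CH * Beta)) * ((t - τ) ^ a * τ ^ (b + c + 1)) := le_of_eq (by ring)
  -- Fubini
  have hint : Integrable (Function.uncurry fun τ σ => S.indicator Φ (τ, σ))
      ((volume.restrict (Ioo 0 t)).prod (volume.restrict (Ioo 0 t))) := by
    have heq : (Function.uncurry fun τ σ => S.indicator Φ (τ, σ)) = S.indicator Φ := rfl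
    rw [heq, integrable_prod_iff hFm.aestronglyMeasurable]
    constructor
    · rw [ae_restrict_iff' measurableSet_Ioo]
      exact Eventually.of_forall slice_integrable
    · exact norm_int
  have lhs_eq : lconv f (lconv g h) t
      = ∫ τ in Ioo (0:ℝ) t, ∫ σ in Ioo (0:ℝ) t, S.indicator Φ (τ, σ) := by
    unfold lconv
    rw [integral_of_le ht.le, integral_Ioc_eq_integral_Ioo]
    exact setIntegral_congr_fun measurableSet_Ioo fun τ hτ => claimA τ hτ
  have rhs_eq : lconv (lconv f g) h t
      = ∫ σ in Ioo (0:ℝ) t, ∫ τ in Ioo (0:ℝ) t, S.indicator Φ (τ, σ) := by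
    show (∫ σ in (0:ℝ)..t, lconv f g (t - σ) * h σ) = _
    rw [integral_of_le ht.le, integral_Ioc_eq_integral_Ioo]
    exact setIntegral_congr_fun measurableSet_Ioo fun σ hσ => (claimB σ hσ).symm
  rw [lhs_eq, rhs_eq]
  exact integral_integral_swap hint

private lemma convNPow_mem {κ : ℝ → ℝ} (hκ : InCm1 κ) : ∀ j, InCm1 (convNPow κ j)
  | 0 => hκ
  | j + 1 => hκ.lconv_mem (convNPow_mem hκ j)

private lemma unit_conv {κ k g : ℝ → ℝ} (hκ : InCm1 κ) (hk : InCm1 k) (hg : InCm1 g)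
    (hson : ∀ x, 0 < x → lconv κ k x = 1) {t : ℝ} (ht : 0 < t) :
    lconv k (lconv κ g) t = ∫ x in (0:ℝ)..t, g x := by
  rw [lconv_assoc hk hκ hg ht]
  show (∫ τ in (0:ℝ)..t, lconv k κ (t - τ) * g τ) = _
  rw [integral_of_le ht.le, integral_of_le ht.le, integral_Ioc_eq_integral_Ioo,
    integral_Ioc_eq_integral_Ioo]
  refine setIntegral_congr_fun measurableSet_Ioo fun τ hτ => ?_
  rw [lconv_comm, hson _ (sub_pos.mpr hτ.2), one_mul]

private lemma keyD {κ k g : ℝ → ℝ} (hκ : InCm1 κ) (hk : InCm1 k) (hg : InCm1 g)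
    (hson : ∀ x, 0 < x → lconv κ k x = 1) {t : ℝ} (ht : 0 < t) :
    HasDerivAt (lconv k (lconv κ g)) (g t) t := by
  have FTC := intervalIntegral.integral_hasDerivAt_right (hg.intervalIntegrable ht)
    ⟨Ioi 0, Ioi_mem_nhds ht, hg.aesm_Ioi⟩ (hg.continuousAt ht)
  refine FTC.congr_of_eventuallyEq ?_
  filter_upwards [Ioi_mem_nhds ht] with s hs
  exact unit_conv hκ hk hg hson hs

private lemma gfd_congr {k g₁ g₂ : ℝ → ℝ} (h : ∀ x, 0 < x → g₁ x = g₂ x) :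
    ∀ x, 0 < x → gfdRL k g₁ x = gfdRL k g₂ x := by
  intro x hx
  apply Filter.EventuallyEq.deriv_eq
  filter_upwards [Ioi_mem_nhds hx] with s hs
  exact lconv_congr_right h hs

private lemma iter_congr {k : ℝ → ℝ} : ∀ (j : ℕ) {g₁ g₂ : ℝ → ℝ},
    (∀ x, 0 < x → g₁ x = g₂ x) → ∀ x, 0 < x → (gfdRL k)^[j] g₁ x = (gfdRL k)^[j] g₂ x := by
  intro j
  induction j with
  | zero => intro g₁ g₂ h x hx; simpa using h x hx
  | succ j IHj =>
    intro g₁ g₂ h x hx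
    rw [Function.iterate_succ_apply, Function.iterate_succ_apply]
    exact IHj (gfd_congr h) x hx

private lemma main_ind {κ k : ℝ → ℝ} (hκ : InCm1 κ) (hk : InCm1 k)
    (hson : ∀ x, 0 < x → lconv κ k x = 1) :
    ∀ m : ℕ, ∀ g : ℝ → ℝ, InCm1 g →
      (∀ i ≤ m, ∀ t, 0 < t →
        DifferentiableAt ℝ (lconv k ((gfdRL k)^[i] (lconv (convNPow κ m) g))) t) ∧
      (∀ t, 0 < t → (gfdRL k)^[m + 1] (lconv (convNPow κ m) g) t = g t) := by
  intro m
  induction m with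
  | zero =>
    intro g hg
    constructor
    · intro i hi t ht
      have h0 : i = 0 := Nat.le_zero.mp hi
      subst h0
      simp only [Function.iterate_zero_apply]
      exact (keyD hκ hk hg hson ht).differentiableAt
    · intro t ht
      exact (keyD hκ hk hg hson ht).deriv
  | succ m IH =>
    intro g hg
    have hBmem : InCm1 (lconv (convNPow κ m) g) := (convNPow_mem hκ m).lconv_mem hg
    have key : ∀ x, 0 < x →
        lconv (convNPow κ (m + 1)) g x = lconv κ (lconv (convNPow κ m) g) x := by
      intro x hx
      show lconv (lconv κ (convNPow κ m)) g x = _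
      exact (lconv_assoc hκ (convNPow_mem hκ m) hg hx).symm
    have first : ∀ x, 0 < x →
        gfdRL k (lconv (convNPow κ (m + 1)) g) x = lconv (convNPow κ m) g x := by
      intro x hx
      rw [gfd_congr key x hx]
      exact (keyD hκ hk hBmem hson hx).deriv
    obtain ⟨IH1, IH2⟩ := IH g hg
    constructor
    · intro i hi t ht
      match i, hi with
      | 0, _ =>
        simp only [Function.iterate_zero_apply]
        have heq : lconv k (lconv (convNPow κ (m + 1)) g)
            =ᶠ[nhds t] lconv k (lconv κ (lconv (convNPow κ m) g)) := by
          filter_upwards [Ioi_mem_nhds ht] with s hs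
          exact lconv_congr_right key hs
        exact heq.differentiableAt_iff.mpr (keyD hκ hk hBmem hson ht).differentiableAt
      | (j + 1), hi =>
        have hj : j ≤ m := Nat.succ_le_succ_iff.mp hi
        have e : ∀ x, 0 < x → (gfdRL k)^[j + 1] (lconv (convNPow κ (m + 1)) g) x
            = (gfdRL k)^[j] (lconv (convNPow κ m) g) x := by
          intro x hx
          rw [Function.iterate_succ_apply]
          exact iter_congr j first x hx
        have heq : lconv k ((gfdRL k)^[j + 1] (lconv (convNPow κ (m + 1)) g))
            =ᶠ[nhds t] lconv k ((gfdRL k)^[j] (lconv (convNPow κ m) g)) := by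
          filter_upwards [Ioi_mem_nhds ht] with s hs
          exact lconv_congr_right e hs
        exact heq.differentiableAt_iff.mpr (IH1 j hj t ht)
    · intro t ht
      rw [Function.iterate_succ_apply]
      have e := iter_congr (k := k) (m + 1) first t ht
      rw [e]
      exact IH2 t ht

/-- first part of Theorem 1 / `t3-n` of the paper: the `n`-fold sequential GFD of
Riemann–Liouville type is a left inverse to the `n`-fold GFI `f ↦ κ^{⟨n⟩} ∗ f` on `C_{−1}(0,∞)`. -/
theorem first_fundamental_theorem_RL
    (κ k : ℝ → ℝ) (h : SoninePairL1 κ k) (n : ℕ) (hn : 1 ≤ n)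
    (f : ℝ → ℝ) (hf : InCm1 f) :
    (∀ i, i < n → ∀ t, 0 < t →
      DifferentiableAt ℝ (lconv k ((gfdRL k)^[i] (lconv (convNPow κ (n - 1)) f))) t) ∧
    (∀ t, 0 < t → (gfdRL k)^[n] (lconv (convNPow κ (n - 1)) f) t = f t) := by
  obtain ⟨⟨p, κ₁, hp0, hp1, hκc, hκe⟩, ⟨q, k₁, hq0, hq1, hkc, hke⟩, hson⟩ := h
  have hκ : InCm1 κ := ⟨p - 1, κ₁, by linarith, hκc, hκe⟩
  have hk : InCm1 k := ⟨q - 1, k₁, by linarith, hkc, hke⟩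
  obtain ⟨m, rfl⟩ : ∃ m, n = m + 1 := ⟨n - 1, (Nat.succ_pred_eq_of_pos hn).symm⟩
  obtain ⟨H1, H2⟩ := main_ind hκ hk hson m f hf
  constructor
  · intro i hi t ht
    simp only [Nat.add_sub_cancel]
    exact H1 i (Nat.lt_succ_iff.mp hi) t ht
  · intro t ht
    simp only [Nat.add_sub_cancel]
    exact H2 t ht

end FFTRLHelpers
end

section
/- Let k : (0,∞) → ℝ have the form k(t) = t^{q−1} k₁(t) with 0 < q < 1 and k₁ continuous on [0,∞), and let f : [0,∞) → ℝ be continuous on [0,∞), differentiable on (0,∞), with derivative f′ of the form f′(t) = t^r g(t), r > −1, g continuous on [0,∞). Then for every t > 0 the function s ↦ (k ∗ f)(s) is differentiable at t and d/dt (k ∗ f)(t) = (k ∗ f′)(t) + f(0) k(t). -/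
section GfdAux
open MeasureTheory Set Filter intervalIntegral

/-- Interval integrability on `[0,t]` from a power bound `|h u| ≤ C * u ^ a`, `a > -1`. -/
lemma pow_bound_intervalIntegrable {t a C : ℝ} (ha : -1 < a) (ht : 0 ≤ t) {h : ℝ → ℝ}
    (hm : AEStronglyMeasurable h (volume.restrict (Set.Ioc 0 t)))
    (hb : ∀ u ∈ Set.Ioc (0:ℝ) t, |h u| ≤ C * u ^ a) :
    IntervalIntegrable h volume 0 t := by
  rw [intervalIntegrable_iff_integrableOn_Ioc_of_le ht]
  have hint : IntegrableOn (fun u : ℝ => C * u ^ a) (Set.Ioc 0 t) volume := by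
    have := (intervalIntegrable_rpow' (a := 0) (b := t) ha).const_mul C
    rwa [intervalIntegrable_iff_integrableOn_Ioc_of_le ht] at this
  exact hint.mono' hm ((ae_restrict_iff' measurableSet_Ioc).2 (Filter.Eventually.of_forall
    fun u hu => by simpa [Real.norm_eq_abs] using hb u hu))

/-- Swapping the order of integration over a triangle. -/
lemma fubini_triangle {t : ℝ} (ht : 0 < t) {F : ℝ → ℝ → ℝ}
    (hF : Integrable (fun p : ℝ × ℝ => F p.1 p.2)
      ((volume.restrict (Set.Ioc 0 t)).prod (volume.restrict (Set.Ioc 0 t))))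
    (hsupp : ∀ σ τ, σ < τ → F σ τ = 0) :
    ∫ σ in (0:ℝ)..t, (∫ τ in (0:ℝ)..σ, F σ τ) =
      ∫ τ in (0:ℝ)..t, (∫ σ in τ..t, F σ τ) := by
  have h1 : ∫ σ in (0:ℝ)..t, (∫ τ in (0:ℝ)..σ, F σ τ)
      = ∫ σ in Set.Ioc (0:ℝ) t, ∫ τ in Set.Ioc (0:ℝ) t, F σ τ := by
    rw [intervalIntegral.integral_of_le ht.le]
    refine setIntegral_congr_fun measurableSet_Ioc (fun σ hσ => ?_)
    rw [intervalIntegral.integral_of_le hσ.1.le]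
    have h2 : ∫ τ in Set.Ioc (0:ℝ) t, F σ τ
        = ∫ τ in Set.Ioc (0:ℝ) t, (Set.Ioc (0:ℝ) σ).indicator (F σ) τ := by
      refine setIntegral_congr_fun measurableSet_Ioc (fun τ hτ => ?_)
      by_cases hc : τ ≤ σ
      · rw [Set.indicator_of_mem (Set.mem_Ioc.2 ⟨hτ.1, hc⟩)]
      · rw [Set.indicator_of_notMem (fun hmem => hc hmem.2), hsupp σ τ (lt_of_not_ge hc)]
    rw [h2, setIntegral_indicator measurableSet_Ioc, Set.Ioc_inter_Ioc, max_self,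
      min_eq_right hσ.2]
  have h2 := MeasureTheory.integral_integral_swap (μ := volume.restrict (Set.Ioc 0 t))
      (ν := volume.restrict (Set.Ioc 0 t)) (f := F) hF
  have h3 : ∫ τ in Set.Ioc (0:ℝ) t, ∫ σ in Set.Ioc (0:ℝ) t, F σ τ
      = ∫ τ in (0:ℝ)..t, (∫ σ in τ..t, F σ τ) := by
    rw [intervalIntegral.integral_of_le ht.le]
    have hae := hF.prod_left_ae
    refine setIntegral_congr_ae measurableSet_Ioc ?_
    filter_upwards [(ae_restrict_iff' measurableSet_Ioc).1 hae] with τ hint hmem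
    have hint' : IntegrableOn (fun σ => F σ τ) (Set.Ioc 0 t) volume := hint hmem
    rw [← Set.Ioc_union_Ioc_eq_Ioc hmem.1.le hmem.2,
      setIntegral_union (by rw [Set.Ioc_disjoint_Ioc]; simp [min_eq_left hmem.2]) measurableSet_Ioc
        (hint'.mono_set (Set.Ioc_subset_Ioc_right hmem.2))
        (hint'.mono_set (Set.Ioc_subset_Ioc_left hmem.1.le)),
      integral_Ioc_eq_integral_Ioo, setIntegral_congr_fun measurableSet_Ioo
        (fun σ hσ => hsupp σ τ hσ.2), MeasureTheory.integral_zero, zero_add,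
      intervalIntegral.integral_of_le hmem.2]
  rw [h1, h2, h3]

/-- zero-extended power-weighted kernel `u^a * k₁(u)` on `(0,∞)`. -/
noncomputable def pker (a : ℝ) (k₁ : ℝ → ℝ) : ℝ → ℝ :=
  fun u => if 0 < u then u ^ a * k₁ (max u 0) else 0

lemma ae_ne_real (c : ℝ) : ∀ᵐ u : ℝ ∂volume, u ≠ c := by
  have h : {u : ℝ | ¬ u ≠ c} = {c} := by ext; simp
  rw [MeasureTheory.ae_iff, h]; exact measure_singleton c

lemma rpow_le_max {lo hi x e : ℝ} (hlo : 0 < lo) (h1 : lo ≤ x) (h2 : x ≤ hi) :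
    x ^ e ≤ max (lo ^ e) (hi ^ e) := by
  rcases le_or_gt 0 e with he|he
  · exact le_max_of_le_right (Real.rpow_le_rpow (hlo.le.trans h1) h2 he)
  · exact le_max_of_le_left (Real.rpow_le_rpow_of_nonpos hlo h1 he.le)

lemma pker_cont {k₁ : ℝ → ℝ} (hc : ContinuousOn k₁ (Set.Ici (0:ℝ))) :
    Continuous fun u : ℝ => k₁ (max u 0) :=
  hc.comp_continuous (continuous_id.max continuous_const) (fun _ => Set.mem_Ici.2 (le_max_right _ _))

lemma pker_measurable (a : ℝ) {k₁ : ℝ → ℝ} (hc : ContinuousOn k₁ (Set.Ici (0:ℝ))) :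
    Measurable (pker a k₁) := by
  unfold pker
  exact Measurable.ite (measurableSet_lt measurable_const measurable_id)
    ((by fun_prop : Measurable fun u : ℝ => u ^ a).mul (pker_cont hc).measurable)
    measurable_const

lemma pker_continuousAt {a : ℝ} {k₁ : ℝ → ℝ} (hc : ContinuousOn k₁ (Set.Ici (0:ℝ)))
    {x : ℝ} (hx : 0 < x) : ContinuousAt (pker a k₁) x := by
  have h1 : ContinuousAt (fun u : ℝ => u ^ a * k₁ (max u 0)) x :=
    (Real.continuousAt_rpow_const x a (Or.inl hx.ne')).mul (pker_cont hc).continuousAt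
  refine h1.congr ?_
  filter_upwards [Ioi_mem_nhds hx] with u hu
  rw [pker, if_pos (Set.mem_Ioi.1 hu)]

lemma pker_exists_bound (a : ℝ) {k₁ : ℝ → ℝ} (hc : ContinuousOn k₁ (Set.Ici (0:ℝ))) (M : ℝ) :
    ∃ C, 0 ≤ C ∧ ∀ u ∈ Set.Icc (0:ℝ) M, |pker a k₁ u| ≤ C * u ^ a := by
  obtain ⟨C, hC⟩ := isCompact_Icc.exists_bound_of_continuousOn
    (s := Set.Icc (0:ℝ) M) (pker_cont hc).continuousOn
  refine ⟨max C 0, le_max_right _ _, fun u hu => ?_⟩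
  rcases eq_or_lt_of_le hu.1 with h|h
  · rw [← h, pker]
    rw [if_neg (lt_irrefl (0:ℝ)), abs_zero]
    exact mul_nonneg (le_max_right C 0) (Real.rpow_nonneg le_rfl a)
  · rw [pker, if_pos h, abs_mul, abs_of_nonneg (Real.rpow_nonneg h.le a), mul_comm]
    exact mul_le_mul_of_nonneg_right
      (((Real.norm_eq_abs _ ▸ hC u hu)).trans (le_max_left _ _))
      (Real.rpow_nonneg h.le a)

lemma pker_intervalIntegrable {a : ℝ} (ha : -1 < a) {k₁ : ℝ → ℝ}
    (hc : ContinuousOn k₁ (Set.Ici (0:ℝ))) {t : ℝ} (ht : 0 ≤ t) :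
    IntervalIntegrable (pker a k₁) volume 0 t := by
  obtain ⟨C, _, hC⟩ := pker_exists_bound a hc t
  exact pow_bound_intervalIntegrable ha ht
    ((pker_measurable a hc).aestronglyMeasurable.restrict)
    (fun u hu => hC u ⟨hu.1.le, hu.2⟩)

lemma beta_integrable {a b : ℝ} (ha : -1 < a) (hb : -1 < b) :
    IntegrableOn (fun u : ℝ => (1-u) ^ a * u ^ b) (Set.Ioc (0:ℝ) 1) volume := by
  rw [← Set.Ioc_union_Ioc_eq_Ioc (by norm_num : (0:ℝ) ≤ 2⁻¹) (by norm_num : (2⁻¹:ℝ) ≤ 1)]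
  apply IntegrableOn.union
  · have hint : IntegrableOn (fun u : ℝ => max ((2⁻¹:ℝ) ^ a) (1 ^ a) * u ^ b)
        (Set.Ioc (0:ℝ) 2⁻¹) volume := by
      have := (intervalIntegrable_rpow' (a := 0) (b := (2⁻¹:ℝ)) hb).const_mul
        (max ((2⁻¹:ℝ) ^ a) (1 ^ a))
      rwa [intervalIntegrable_iff_integrableOn_Ioc_of_le (by norm_num)] at this
    refine hint.mono' ((by fun_prop : Measurable fun u : ℝ => (1-u) ^ a * u ^ b).aestronglyMeasurable.restrict) ?_
    refine (ae_restrict_iff' measurableSet_Ioc).2 (Filter.Eventually.of_forall fun u hu => ?_)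
    have h1 : (0:ℝ) < 1 - u := by linarith [hu.2]
    rw [Real.norm_eq_abs, abs_mul, abs_of_nonneg (Real.rpow_nonneg h1.le a),
      abs_of_nonneg (Real.rpow_nonneg hu.1.le b)]
    exact mul_le_mul_of_nonneg_right
      (rpow_le_max (by norm_num) (by linarith [hu.2]) (by linarith [hu.1]))
      (Real.rpow_nonneg hu.1.le b)
  · have hint : IntegrableOn (fun u : ℝ => (1-u) ^ a * max ((2⁻¹:ℝ) ^ b) (1 ^ b))
        (Set.Ioc (2⁻¹:ℝ) 1) volume := by
      have h0 := (intervalIntegrable_rpow' (a := 0) (b := (2⁻¹:ℝ)) ha).comp_sub_left 1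
      -- : IntervalIntegrable (fun u => (1-u)^a) volume (1-0) (1-2⁻¹)
      have h1 : IntervalIntegrable (fun u : ℝ => (1-u) ^ a) volume (2⁻¹:ℝ) 1 := by
        have := h0.symm
        norm_num at this ⊢
        exact this
      have := h1.mul_const (max ((2⁻¹:ℝ) ^ b) (1 ^ b))
      rwa [intervalIntegrable_iff_integrableOn_Ioc_of_le (by norm_num)] at this
    refine hint.mono' ((by fun_prop : Measurable fun u : ℝ => (1-u) ^ a * u ^ b).aestronglyMeasurable.restrict) ?_
    refine (ae_restrict_iff' measurableSet_Ioc).2 (Filter.Eventually.of_forall fun u hu => ?_)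
    have h1 : (0:ℝ) ≤ 1 - u := by linarith [hu.2]
    rw [Real.norm_eq_abs, abs_mul, abs_of_nonneg (Real.rpow_nonneg h1 a),
      abs_of_nonneg (Real.rpow_nonneg (by linarith [hu.1] : (0:ℝ) ≤ u) b)]
    exact mul_le_mul_of_nonneg_left
      (rpow_le_max (by norm_num) hu.1.le hu.2) (Real.rpow_nonneg h1 a)

lemma pker_scale_bound {a b : ℝ} {k₁ g₁ : ℝ → ℝ} {Ck Cg M : ℝ}
    (hCk0 : 0 ≤ Ck) (hCg0 : 0 ≤ Cg)
    (hCk : ∀ v ∈ Set.Icc (0:ℝ) M, |pker a k₁ v| ≤ Ck * v ^ a)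
    (hCg : ∀ v ∈ Set.Icc (0:ℝ) M, |pker b g₁ v| ≤ Cg * v ^ b)
    {σ : ℝ} (hσ : 0 < σ) (hσM : σ ≤ M) {u : ℝ} (hu : u ∈ Set.Ioc (0:ℝ) 1) :
    |σ * (pker a k₁ (σ - σ*u) * pker b g₁ (σ*u))|
      ≤ (σ ^ (a+b+1) * (Ck * Cg)) * ((1-u) ^ a * u ^ b) := by
  rcases eq_or_lt_of_le hu.2 with h1|h1
  · rw [h1, mul_one, sub_self, pker, if_neg (lt_irrefl (0:ℝ))]
    rw [zero_mul, mul_zero, abs_zero]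
    have : (0:ℝ) ≤ (1 - 1) ^ a * 1 ^ b :=
      mul_nonneg (Real.rpow_nonneg (by norm_num) a) (Real.rpow_nonneg (by norm_num) b)
    exact mul_nonneg (mul_nonneg (Real.rpow_nonneg hσ.le _) (mul_nonneg hCk0 hCg0)) this
  · have hu1 : (0:ℝ) < 1 - u := by linarith
    have hx1 : (0:ℝ) < σ * (1 - u) := mul_pos hσ hu1
    have hx2 : (0:ℝ) < σ * u := mul_pos hσ hu.1
    have e1 : σ - σ * u = σ * (1 - u) := by ring
    have m1 : σ * (1 - u) ∈ Set.Icc (0:ℝ) M :=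
      ⟨hx1.le, le_trans (by nlinarith) hσM⟩
    have m2 : σ * u ∈ Set.Icc (0:ℝ) M := ⟨hx2.le, le_trans (by nlinarith) hσM⟩
    calc |σ * (pker a k₁ (σ - σ*u) * pker b g₁ (σ*u))|
        = σ * (|pker a k₁ (σ * (1-u))| * |pker b g₁ (σ*u)|) := by
          rw [e1, abs_mul, abs_mul, abs_of_nonneg hσ.le]
      _ ≤ σ * ((Ck * (σ * (1-u)) ^ a) * (Cg * (σ*u) ^ b)) := by
          have := mul_le_mul (hCk _ m1) (hCg _ m2) (abs_nonneg _)
            (by positivity)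
          exact mul_le_mul_of_nonneg_left this hσ.le
      _ = (σ ^ (a+b+1) * (Ck * Cg)) * ((1-u) ^ a * u ^ b) := by
          rw [Real.mul_rpow hσ.le hu1.le, Real.mul_rpow hσ.le hu.1.le,
            Real.rpow_add hσ, Real.rpow_add hσ, Real.rpow_one]
          ring

lemma conv_pker_repr (a b : ℝ) (k₁ g₁ : ℝ → ℝ) {σ : ℝ} (hσ : 0 < σ) :
    ∫ τ in (0:ℝ)..σ, pker a k₁ (σ - τ) * pker b g₁ τ
      = ∫ u in Set.Ioc (0:ℝ) 1, σ * (pker a k₁ (σ - σ*u) * pker b g₁ (σ*u)) := by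
  have h := intervalIntegral.integral_comp_mul_left (a := (0:ℝ)) (b := 1)
    (f := fun τ => pker a k₁ (σ - τ) * pker b g₁ τ) (c := σ) hσ.ne'
  rw [mul_zero, mul_one] at h
  rw [← intervalIntegral.integral_of_le zero_le_one, intervalIntegral.integral_const_mul, h,
    smul_eq_mul, mul_inv_cancel_left₀ hσ.ne']

lemma conv_pker_continuousAt {a b : ℝ} (ha : -1 < a) (hb : -1 < b) {k₁ g₁ : ℝ → ℝ}
    (hk : ContinuousOn k₁ (Set.Ici (0:ℝ))) (hg : ContinuousOn g₁ (Set.Ici (0:ℝ)))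
    {x : ℝ} (hx : 0 < x) :
    ContinuousAt (fun σ => ∫ τ in (0:ℝ)..σ, pker a k₁ (σ - τ) * pker b g₁ τ) x := by
  obtain ⟨Ck, hCk0, hCk⟩ := pker_exists_bound a hk (x+1)
  obtain ⟨Cg, hCg0, hCg⟩ := pker_exists_bound b hg (x+1)
  set B := max ((x/2) ^ (a+b+1)) ((x+1) ^ (a+b+1)) with hB
  have hcont : ContinuousAt
      (fun σ => ∫ u in Set.Ioc (0:ℝ) 1, σ * (pker a k₁ (σ - σ*u) * pker b g₁ (σ*u))) x := by
    apply MeasureTheory.continuousAt_of_dominated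
      (bound := fun u => (B * (Ck * Cg)) * ((1-u) ^ a * u ^ b))
    · refine Filter.Eventually.of_forall fun σ => ?_
      exact ((measurable_const.mul (((pker_measurable a hk).comp
        (measurable_const.sub (measurable_const.mul measurable_id))).mul
        ((pker_measurable b hg).comp
        (measurable_const.mul measurable_id)))).aestronglyMeasurable).restrict
    · filter_upwards [Ioo_mem_nhds (by linarith : x/2 < x) (by linarith : x < x+1)] with σ hσ
      refine (ae_restrict_iff' measurableSet_Ioc).2 (Filter.Eventually.of_forall fun u hu => ?_)
      have hσ0 : 0 < σ := lt_trans (by linarith) hσ.1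
      have h1 := pker_scale_bound hCk0 hCg0 hCk hCg hσ0 (le_of_lt hσ.2) hu
      rw [Real.norm_eq_abs]
      refine h1.trans ?_
      have h2 : σ ^ (a+b+1) ≤ B := rpow_le_max (by linarith) hσ.1.le hσ.2.le
      have h3 : (0:ℝ) ≤ (1-u) ^ a * u ^ b :=
        mul_nonneg (Real.rpow_nonneg (by linarith [hu.2]) a) (Real.rpow_nonneg hu.1.le b)
      exact mul_le_mul_of_nonneg_right
        (mul_le_mul_of_nonneg_right h2 (mul_nonneg hCk0 hCg0)) h3
    · exact (beta_integrable ha hb).const_mul _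
    · have h1e : ∀ᵐ u ∂(volume.restrict (Set.Ioc (0:ℝ) 1)), u ∈ Set.Ioo (0:ℝ) 1 := by
        filter_upwards [ae_restrict_of_ae (ae_ne_real 1),
          ae_restrict_mem measurableSet_Ioc] with u h1 h2
        exact ⟨h2.1, lt_of_le_of_ne h2.2 h1⟩
      filter_upwards [h1e] with u hu
      have c1 : ContinuousAt (fun σ : ℝ => σ - σ*u) x :=
        continuousAt_id.sub (continuousAt_id.mul continuousAt_const)
      have c2 : ContinuousAt (fun σ : ℝ => σ*u) x :=
        continuousAt_id.mul continuousAt_const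
      have p1 : (0:ℝ) < x - x*u := by nlinarith [hu.1, hu.2]
      have p2 : (0:ℝ) < x*u := mul_pos hx hu.1
      have q1 : ContinuousAt (fun σ : ℝ => pker a k₁ (σ - σ*u)) x :=
        (pker_continuousAt hk p1).comp (f := fun σ : ℝ => σ - σ*u) c1
      have q2 : ContinuousAt (fun σ : ℝ => pker b g₁ (σ*u)) x :=
        (pker_continuousAt hg p2).comp (f := fun σ : ℝ => σ*u) c2
      exact continuousAt_id.mul (q1.mul q2)
  refine hcont.congr ?_
  filter_upwards [Ioi_mem_nhds hx] with σ hσ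
  exact (conv_pker_repr a b k₁ g₁ (Set.mem_Ioi.1 hσ)).symm

lemma conv_pker_bound {a b : ℝ} (ha : -1 < a) (hb : -1 < b) {k₁ g₁ : ℝ → ℝ}
    (hk : ContinuousOn k₁ (Set.Ici (0:ℝ))) (hg : ContinuousOn g₁ (Set.Ici (0:ℝ))) (M : ℝ) :
    ∃ C, 0 ≤ C ∧ ∀ σ ∈ Set.Ioc (0:ℝ) M,
      |∫ τ in (0:ℝ)..σ, pker a k₁ (σ - τ) * pker b g₁ τ| ≤ C * σ ^ (a+b+1) := by
  obtain ⟨Ck, hCk0, hCk⟩ := pker_exists_bound a hk M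
  obtain ⟨Cg, hCg0, hCg⟩ := pker_exists_bound b hg M
  set I := ∫ u in Set.Ioc (0:ℝ) 1, (1-u) ^ a * u ^ b with hI
  have hI0 : 0 ≤ I := MeasureTheory.setIntegral_nonneg measurableSet_Ioc fun u hu =>
    mul_nonneg (Real.rpow_nonneg (by linarith [hu.2]) a) (Real.rpow_nonneg hu.1.le b)
  refine ⟨Ck * Cg * I, by positivity, fun σ hσ => ?_⟩
  rw [conv_pker_repr a b k₁ g₁ hσ.1]
  have hle := MeasureTheory.norm_integral_le_of_norm_le
    (f := fun u => σ * (pker a k₁ (σ - σ*u) * pker b g₁ (σ*u)))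
    (g := fun u => (σ ^ (a+b+1) * (Ck * Cg)) * ((1-u) ^ a * u ^ b))
    (μ := volume.restrict (Set.Ioc (0:ℝ) 1))
    ((beta_integrable ha hb).const_mul _)
    ((ae_restrict_iff' measurableSet_Ioc).2 (Filter.Eventually.of_forall fun u hu => by
      rw [Real.norm_eq_abs]
      exact pker_scale_bound hCk0 hCg0 hCk hCg hσ.1 hσ.2 hu))
  rw [Real.norm_eq_abs] at hle
  refine hle.trans ?_
  rw [MeasureTheory.integral_const_mul]
  apply le_of_eq; ring

lemma conv_pker_intervalIntegrable {a b : ℝ} (ha : -1 < a) (hb : -1 < b) {k₁ g₁ : ℝ → ℝ}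
    (hk : ContinuousOn k₁ (Set.Ici (0:ℝ))) (hg : ContinuousOn g₁ (Set.Ici (0:ℝ)))
    {T : ℝ} (hT : 0 ≤ T) :
    IntervalIntegrable (fun σ => ∫ τ in (0:ℝ)..σ, pker a k₁ (σ - τ) * pker b g₁ τ) volume 0 T := by
  obtain ⟨C, hC0, hC⟩ := conv_pker_bound ha hb hk hg T
  refine pow_bound_intervalIntegrable (by linarith : (-1:ℝ) < a+b+1) hT ?_ hC
  refine ContinuousOn.aestronglyMeasurable (fun x hx => ?_) measurableSet_Ioc
  exact (conv_pker_continuousAt ha hb hk hg hx.1).continuousWithinAt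

end GfdAux

section Main
open MeasureTheory Set Filter intervalIntegral

/-- formula \eqref{GFDL-1} of the paper: for `f ∈ C^1_{−1}(0,∞)`, the GFD of
Riemann–Liouville type satisfies `(𝔻_{(k)} f)(t) = (k ∗ f′)(t) + f(0) k(t)`. -/
theorem gfdRL_eq_conv_deriv_add
    (k k₁ : ℝ → ℝ) (q : ℝ) (hq0 : 0 < q) (hq1 : q < 1)
    (hk₁ : ContinuousOn k₁ (Set.Ici (0:ℝ)))
    (hk : ∀ t, 0 < t → k t = t ^ (q - 1) * k₁ t)
    (f : ℝ → ℝ) (hfc : ContinuousOn f (Set.Ici (0:ℝ)))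
    (hfd : ∀ t, 0 < t → DifferentiableAt ℝ f t)
    (r : ℝ) (hr : -1 < r) (g : ℝ → ℝ) (hg : ContinuousOn g (Set.Ici (0:ℝ)))
    (hf' : ∀ t, 0 < t → deriv f t = t ^ r * g t) :
    ∀ t, 0 < t → HasDerivAt (lconv k f) (lconv k (deriv f) t + f 0 * k t) t := by
  intro T hT
  have hq1' : (-1:ℝ) < q - 1 := by linarith
  set k₀ : ℝ → ℝ := pker (q-1) k₁ with hk₀def
  set φ : ℝ → ℝ := pker r g with hφdef
  have meask : Measurable k₀ := pker_measurable _ hk₁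
  have measφ : Measurable φ := pker_measurable _ hg
  have hk₀ : ∀ u : ℝ, 0 < u → k₀ u = k u := by
    intro u hu
    rw [hk₀def, pker, if_pos hu, max_eq_left hu.le, hk u hu]
  have hφeq : ∀ s : ℝ, 0 < s → φ s = deriv f s := by
    intro s hs
    rw [hφdef, pker, if_pos hs, max_eq_left hs.le, hf' s hs]
  have IIk : ∀ t : ℝ, 0 ≤ t → IntervalIntegrable k₀ volume 0 t := fun t ht =>
    pker_intervalIntegrable hq1' hk₁ ht
  have IIφ : ∀ t : ℝ, 0 ≤ t → IntervalIntegrable φ volume 0 t := fun t ht =>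
    pker_intervalIntegrable hr hg ht
  -- Fundamental theorem of calculus for f
  have ftc : ∀ τ : ℝ, 0 ≤ τ → ∫ s in (0:ℝ)..τ, φ s = f τ - f 0 := by
    intro τ hτ
    refine intervalIntegral.integral_eq_sub_of_hasDeriv_right ?_ ?_ (IIφ τ hτ)
    · rw [Set.uIcc_of_le hτ]
      exact hfc.mono Set.Icc_subset_Ici_self
    · intro x hx
      rw [inf_of_le_left hτ, sup_of_le_right hτ] at hx
      have hd := (hfd x hx.1).hasDerivAt
      exact (hφeq x hx.1).symm ▸ hd.hasDerivWithinAt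
  -- the key integral identity
  have key : ∀ t : ℝ, 0 < t → lconv k f t
      = f 0 * (∫ x in (0:ℝ)..t, k₀ x)
        + ∫ σ in (0:ℝ)..t, (∫ τ in (0:ℝ)..σ, k₀ (σ - τ) * φ τ) := by
    intro t ht
    obtain ⟨Ck, hCk0, hCk⟩ := pker_exists_bound (q-1) hk₁ t
    obtain ⟨Cg, hCg0, hCg⟩ := pker_exists_bound r hg t
    obtain ⟨Cf, hCf⟩ := isCompact_Icc.exists_bound_of_continuousOn
      (s := Set.Icc (0:ℝ) t) (hfc.mono Set.Icc_subset_Ici_self)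
    have hCf' : ∀ x ∈ Set.Icc (0:ℝ) t, |f x| ≤ Cf := fun x hx =>
      Real.norm_eq_abs (f x) ▸ hCf x hx
    have intk : IntegrableOn k₀ (Set.Ioc 0 t) volume :=
      (intervalIntegrable_iff_integrableOn_Ioc_of_le ht.le).1 (IIk t ht.le)
    have intφ : IntegrableOn φ (Set.Ioc 0 t) volume :=
      (intervalIntegrable_iff_integrableOn_Ioc_of_le ht.le).1 (IIφ t ht.le)
    have IIkrev : IntervalIntegrable (fun τ => k₀ (t - τ)) volume 0 t := by
      have := ((IIk t ht.le).comp_sub_left t).symm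
      simpa using this
    have IIpowrev : IntervalIntegrable (fun τ : ℝ => (t - τ) ^ (q-1)) volume 0 t := by
      have := ((intervalIntegrable_rpow' (a := 0) (b := t) hq1').comp_sub_left t).symm
      simpa using this
    have intpowrev : IntegrableOn (fun τ : ℝ => (t - τ) ^ (q-1)) (Set.Ioc 0 t) volume :=
      (intervalIntegrable_iff_integrableOn_Ioc_of_le ht.le).1 IIpowrev
    have intφpow : IntegrableOn (fun s : ℝ => s ^ r) (Set.Ioc 0 t) volume :=
      (intervalIntegrable_iff_integrableOn_Ioc_of_le ht.le).1 (intervalIntegrable_rpow' hr)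
    have k₀bd : ∀ τ ∈ Set.Icc (0:ℝ) t, |k₀ (t - τ)| ≤ Ck * (t - τ) ^ (q-1) := fun τ hτ =>
      hCk (t - τ) ⟨by linarith [hτ.2], by linarith [hτ.1]⟩
    -- step 1 : replace k by k₀
    have s1 : lconv k f t = ∫ τ in (0:ℝ)..t, k₀ (t - τ) * f τ := by
      show (∫ τ in (0:ℝ)..t, k (t - τ) * f τ) = _
      refine intervalIntegral.integral_congr_ae ?_
      filter_upwards [ae_ne_real t] with τ hτ hmem
      rw [Set.uIoc_of_le ht.le] at hmem
      rw [hk₀ _ (sub_pos.2 (lt_of_le_of_ne hmem.2 hτ))]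
    have hA : IntervalIntegrable (fun τ => f 0 * k₀ (t - τ)) volume 0 t := IIkrev.const_mul _
    have hB : IntervalIntegrable (fun τ => k₀ (t - τ) * (f τ - f 0)) volume 0 t := by
      rw [intervalIntegrable_iff_integrableOn_Ioc_of_le ht.le]
      have hint : IntegrableOn (fun τ : ℝ => Ck * (t - τ) ^ (q-1) * (2*Cf))
          (Set.Ioc 0 t) volume := (intpowrev.const_mul Ck).mul_const _
      refine hint.mono' ?_ ?_
      · exact ((meask.comp (measurable_const.sub measurable_id)).aestronglyMeasurable.restrict).mul
          ((((hfc.mono (fun x hx => hx.1.le)).aestronglyMeasurable measurableSet_Ioc)).sub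
            aestronglyMeasurable_const)
      · refine (ae_restrict_iff' measurableSet_Ioc).2 (Filter.Eventually.of_forall fun τ hτ => ?_)
        rw [Real.norm_eq_abs, abs_mul]
        refine mul_le_mul (k₀bd τ ⟨hτ.1.le, hτ.2⟩) ?_ (abs_nonneg _)
          (mul_nonneg hCk0 (Real.rpow_nonneg (by linarith [hτ.2]) _))
        calc |f τ - f 0| ≤ |f τ| + |f 0| := by
              simpa [Real.norm_eq_abs] using norm_sub_le (f τ) (f 0)
          _ ≤ Cf + Cf := add_le_add (hCf' τ ⟨hτ.1.le, hτ.2⟩) (hCf' 0 ⟨le_refl 0, ht.le⟩)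
          _ = 2*Cf := by ring
    have split : ∫ τ in (0:ℝ)..t, k₀ (t - τ) * f τ
        = (∫ τ in (0:ℝ)..t, f 0 * k₀ (t - τ))
          + ∫ τ in (0:ℝ)..t, k₀ (t - τ) * (f τ - f 0) := by
      rw [← intervalIntegral.integral_add hA hB]
      exact intervalIntegral.integral_congr fun τ _ => by ring
    have s4 : ∫ τ in (0:ℝ)..t, f 0 * k₀ (t - τ) = f 0 * ∫ x in (0:ℝ)..t, k₀ x := by
      rw [intervalIntegral.integral_const_mul, intervalIntegral.integral_comp_sub_left k₀ t]
      norm_num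
    -- Fubini 1
    set F₁ : ℝ → ℝ → ℝ := fun τ s => if s ≤ τ then k₀ (t - τ) * φ s else 0 with hF₁
    have hint1 : Integrable (fun p : ℝ × ℝ => F₁ p.1 p.2)
        ((volume.restrict (Set.Ioc 0 t)).prod (volume.restrict (Set.Ioc 0 t))) := by
      have hG : Integrable (fun p : ℝ × ℝ => (Ck * (t - p.1) ^ (q-1)) * (Cg * p.2 ^ r))
          ((volume.restrict (Set.Ioc 0 t)).prod (volume.restrict (Set.Ioc 0 t))) :=
        (intpowrev.const_mul Ck).mul_prod (intφpow.const_mul Cg)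
      refine hG.mono' ?_ ?_
      · exact (Measurable.ite (measurableSet_le measurable_snd measurable_fst)
          ((meask.comp (measurable_const.sub measurable_fst)).mul (measφ.comp measurable_snd))
          measurable_const).aestronglyMeasurable
      · rw [Measure.prod_restrict]
        refine (ae_restrict_iff' (measurableSet_Ioc.prod measurableSet_Ioc)).2
          (Filter.Eventually.of_forall fun p hp => ?_)
        have hp1 : p.1 ∈ Set.Ioc (0:ℝ) t := hp.1
        have hp2 : p.2 ∈ Set.Ioc (0:ℝ) t := hp.2
        rw [Real.norm_eq_abs]
        simp only [hF₁]
        by_cases hc : p.2 ≤ p.1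
        · rw [if_pos hc, abs_mul]
          exact mul_le_mul (hCk _ ⟨by linarith [hp1.2], by linarith [hp1.1]⟩)
            (hCg _ ⟨hp2.1.le, hp2.2⟩) (abs_nonneg _)
            (mul_nonneg hCk0 (Real.rpow_nonneg (by linarith [hp1.2]) _))
        · rw [if_neg hc, abs_zero]
          exact mul_nonneg (mul_nonneg hCk0 (Real.rpow_nonneg (by linarith [hp1.2]) _))
            (mul_nonneg hCg0 (Real.rpow_nonneg hp2.1.le _))
    have fub1 : ∫ τ in (0:ℝ)..t, (∫ s in (0:ℝ)..τ, F₁ τ s)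
        = ∫ s in (0:ℝ)..t, (∫ τ in s..t, F₁ τ s) :=
      fubini_triangle ht hint1 (fun σ τ h => if_neg (not_le.2 h))
    have stepA : ∫ τ in (0:ℝ)..t, k₀ (t - τ) * (f τ - f 0)
        = ∫ τ in (0:ℝ)..t, (∫ s in (0:ℝ)..τ, F₁ τ s) := by
      refine intervalIntegral.integral_congr fun τ hτ => ?_
      rw [Set.uIcc_of_le ht.le] at hτ
      have e1 : ∫ s in (0:ℝ)..τ, F₁ τ s = ∫ s in (0:ℝ)..τ, k₀ (t - τ) * φ s := by
        refine intervalIntegral.integral_congr fun s hs => ?_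
        rw [Set.uIcc_of_le hτ.1] at hs
        simp only [hF₁]
        rw [if_pos hs.2]
      rw [e1, intervalIntegral.integral_const_mul, ftc τ hτ.1]
    have stepC : ∫ s in (0:ℝ)..t, (∫ τ in s..t, F₁ τ s)
        = ∫ s in (0:ℝ)..t, φ s * (∫ x in (0:ℝ)..(t - s), k₀ x) := by
      refine intervalIntegral.integral_congr fun s hs => ?_
      rw [Set.uIcc_of_le ht.le] at hs
      have e1 : ∫ τ in s..t, F₁ τ s = ∫ τ in s..t, k₀ (t - τ) * φ s := by
        refine intervalIntegral.integral_congr fun τ hτ => ?_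
        rw [Set.uIcc_of_le hs.2] at hτ
        simp only [hF₁]
        rw [if_pos hτ.1]
      rw [e1, intervalIntegral.integral_mul_const,
        intervalIntegral.integral_comp_sub_left k₀ t, sub_self, mul_comm]
    -- Fubini 2
    set F₂ : ℝ → ℝ → ℝ := fun σ τ => if τ ≤ σ then k₀ (σ - τ) * φ τ else 0 with hF₂
    have hint2 : Integrable (fun p : ℝ × ℝ => F₂ p.1 p.2)
        ((volume.restrict (Set.Ioc 0 t)).prod (volume.restrict (Set.Ioc 0 t))) := by
      set φh := (Set.Ioc (0:ℝ) t).indicator φ with hφh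
      set kh := (Set.Ioc (0:ℝ) t).indicator k₀ with hkh
      have h1 : Integrable φh volume := (integrable_indicator_iff measurableSet_Ioc).2 intφ
      have h2 : Integrable kh volume := (integrable_indicator_iff measurableSet_Ioc).2 intk
      have hconv0 := MeasureTheory.Integrable.convolution_integrand (𝕜 := ℝ)
        (ContinuousLinearMap.mul ℝ ℝ) h1 h2
      have hconv : Integrable (fun p : ℝ × ℝ => φh p.2 * kh (p.1 - p.2))
          (volume.prod volume) := by
        simpa [ContinuousLinearMap.mul_apply'] using hconv0
      rw [Measure.prod_restrict]
      refine (hconv.norm.restrict).mono' ?_ ?_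
      · exact (Measurable.ite (measurableSet_le measurable_snd measurable_fst)
          ((meask.comp (measurable_fst.sub measurable_snd)).mul (measφ.comp measurable_snd))
          measurable_const).aestronglyMeasurable
      · refine (ae_restrict_iff' (measurableSet_Ioc.prod measurableSet_Ioc)).2
          (Filter.Eventually.of_forall fun p hp => ?_)
        have hp1 : p.1 ∈ Set.Ioc (0:ℝ) t := hp.1
        have hp2 : p.2 ∈ Set.Ioc (0:ℝ) t := hp.2
        simp only [hF₂]
        by_cases hc : p.2 ≤ p.1
        · rw [if_pos hc]
          rcases eq_or_lt_of_le hc with he|hlt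
          · have hz : k₀ (p.1 - p.2) = 0 := by
              rw [← he, sub_self, hk₀def, pker, if_neg (lt_irrefl (0:ℝ))]
            rw [Real.norm_eq_abs, hz, zero_mul, abs_zero]
            exact norm_nonneg _
          · have hmem : p.1 - p.2 ∈ Set.Ioc (0:ℝ) t :=
              ⟨sub_pos.2 hlt, by linarith [hp1.2, hp2.1]⟩
            rw [hφh, hkh, Set.indicator_of_mem hp2 φ, Set.indicator_of_mem hmem k₀]
            exact le_of_eq (by rw [Real.norm_eq_abs, Real.norm_eq_abs, mul_comm])
        · rw [if_neg hc, Real.norm_eq_abs, abs_zero]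
          exact norm_nonneg _
    have fub2 : ∫ σ in (0:ℝ)..t, (∫ τ in (0:ℝ)..σ, F₂ σ τ)
        = ∫ τ in (0:ℝ)..t, (∫ σ in τ..t, F₂ σ τ) :=
      fubini_triangle ht hint2 (fun σ τ h => if_neg (not_le.2 h))
    have stepD1 : ∫ σ in (0:ℝ)..t, (∫ τ in (0:ℝ)..σ, F₂ σ τ)
        = ∫ σ in (0:ℝ)..t, (∫ τ in (0:ℝ)..σ, k₀ (σ - τ) * φ τ) := by
      refine intervalIntegral.integral_congr fun σ hσ => ?_
      rw [Set.uIcc_of_le ht.le] at hσ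
      refine intervalIntegral.integral_congr fun τ hτ => ?_
      rw [Set.uIcc_of_le hσ.1] at hτ
      simp only [hF₂]
      rw [if_pos hτ.2]
    have stepD2 : ∫ τ in (0:ℝ)..t, (∫ σ in τ..t, F₂ σ τ)
        = ∫ τ in (0:ℝ)..t, φ τ * (∫ x in (0:ℝ)..(t - τ), k₀ x) := by
      refine intervalIntegral.integral_congr fun τ hτ => ?_
      rw [Set.uIcc_of_le ht.le] at hτ
      have e1 : ∫ σ in τ..t, F₂ σ τ = ∫ σ in τ..t, k₀ (σ - τ) * φ τ := by
        refine intervalIntegral.integral_congr fun σ hσ => ?_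
        rw [Set.uIcc_of_le hτ.2] at hσ
        simp only [hF₂]
        rw [if_pos hσ.1]
      rw [e1, intervalIntegral.integral_mul_const,
        intervalIntegral.integral_comp_sub_right k₀ τ, sub_self, mul_comm]
    rw [s1, split, s4, stepA, fub1, stepC, ← stepD2, ← fub2, stepD1]
  -- derivative of the two pieces at T
  have dK : HasDerivAt (fun u => ∫ x in (0:ℝ)..u, k₀ x) (k₀ T) T :=
    intervalIntegral.integral_hasDerivAt_right (IIk T hT.le)
      (meask.stronglyMeasurable.stronglyMeasurableAtFilter)
      (pker_continuousAt hk₁ hT)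
  have dH : HasDerivAt (fun u => ∫ σ in (0:ℝ)..u, (∫ τ in (0:ℝ)..σ, k₀ (σ - τ) * φ τ))
      (∫ τ in (0:ℝ)..T, k₀ (T - τ) * φ τ) T := by
    refine intervalIntegral.integral_hasDerivAt_right
      (conv_pker_intervalIntegrable hq1' hr hk₁ hg hT.le) ?_
      (conv_pker_continuousAt hq1' hr hk₁ hg hT)
    exact ContinuousOn.stronglyMeasurableAtFilter isOpen_Ioi
      (fun x hx => (conv_pker_continuousAt hq1' hr hk₁ hg hx).continuousWithinAt)
      T (Set.mem_Ioi.2 hT)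
  have dsum := (dK.const_mul (f 0)).add dH
  have hev : lconv k f =ᶠ[nhds T] fun u => f 0 * (∫ x in (0:ℝ)..u, k₀ x)
      + ∫ σ in (0:ℝ)..u, (∫ τ in (0:ℝ)..σ, k₀ (σ - τ) * φ τ) := by
    filter_upwards [Ioi_mem_nhds hT] with u hu
    exact key u (Set.mem_Ioi.1 hu)
  have hfinal := HasDerivAt.congr_of_eventuallyEq dsum hev
  have hval : lconv k (deriv f) T + f 0 * k T
      = f 0 * k₀ T + ∫ τ in (0:ℝ)..T, k₀ (T - τ) * φ τ := by
    rw [← hk₀ T hT]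
    have h2 : lconv k (deriv f) T = ∫ τ in (0:ℝ)..T, k₀ (T - τ) * φ τ := by
      show (∫ τ in (0:ℝ)..T, k (T - τ) * deriv f τ) = _
      refine intervalIntegral.integral_congr_ae ?_
      filter_upwards [ae_ne_real T] with τ hτ hmem
      rw [Set.uIoc_of_le hT.le] at hmem
      rw [hk₀ _ (sub_pos.2 (lt_of_le_of_ne hmem.2 hτ)), hφeq _ hmem.1]
    rw [h2]; ring
  rw [hval]
  exact hfinal

end Main
end

section
/- Let 0 < α < 1 and define κ(t) = Σ_{m=0}^∞ (−1)^m t^{m+α−1} / (m! Γ(m+α)) and k(t) = Σ_{m=0}^∞ t^{m−α} / (m! Γ(m+1−α)) for t > 0 (these are κ(t) = (√t)^{α−1} J_{α−1}(2√t) and k(t) = (√t)^{−α} I_{−α}(2√t) in terms of the Bessel function J_ν and modified Bessel function I_ν). Then (κ ∗ k)(t) = 1 for all t > 0, i.e., (κ, k) satisfies the Sonine condition. -/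
open MeasureTheory Real Set Filter

lemma summable_gamma_aux {β : ℝ} (hβ : 0 < β) {x : ℝ} (hx : 0 < x) :
    Summable fun m : ℕ => x ^ m / ((m.factorial : ℝ) * Real.Gamma ((m : ℝ) + β)) := by
  have hpos : ∀ m : ℕ, 0 < x ^ m / ((m.factorial : ℝ) * Real.Gamma ((m : ℝ) + β)) := by
    intro m
    apply div_pos (pow_pos hx m)
    exact mul_pos (by positivity) (Real.Gamma_pos_of_pos (by positivity))
  apply summable_of_ratio_test_tendsto_lt_one one_pos
    (Filter.Eventually.of_forall fun m => (hpos m).ne')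
  have key : ∀ m : ℕ, ‖x ^ (m+1) / (((m+1).factorial : ℝ) * Real.Gamma (((m+1 : ℕ) : ℝ) + β))‖ /
      ‖x ^ m / ((m.factorial : ℝ) * Real.Gamma ((m : ℝ) + β))‖
      = x / (((m:ℝ) + 1) * ((m : ℝ) + β)) := by
    intro m
    have hg : Real.Gamma (((m+1 : ℕ) : ℝ) + β) = ((m:ℝ) + β) * Real.Gamma ((m:ℝ) + β) := by
      push_cast
      rw [show (m:ℝ) + 1 + β = ((m:ℝ) + β) + 1 by ring, Real.Gamma_add_one (by positivity)]
    rw [Real.norm_of_nonneg (hpos (m+1)).le, Real.norm_of_nonneg (hpos m).le, hg]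
    have h1 : (0:ℝ) < (m.factorial : ℝ) := by positivity
    have h2 : (0:ℝ) < Real.Gamma ((m:ℝ) + β) := Real.Gamma_pos_of_pos (by positivity)
    have h3 : (0:ℝ) < (m:ℝ) + β := by positivity
    rw [Nat.factorial_succ]
    push_cast
    field_simp
    ring
  simp only [key]
  have h2 : Tendsto (fun m : ℕ => ((m:ℝ) + 1) * ((m : ℝ) + β)) atTop atTop := by
    apply Filter.Tendsto.atTop_mul_atTop₀ <;>
      exact tendsto_atTop_add_const_right _ _ tendsto_natCast_atTop_atTop
  have := (h2.inv_tendsto_atTop).const_mul x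
  simp only [mul_zero] at this
  refine this.congr fun m => ?_
  simp [div_eq_mul_inv]

lemma real_beta {a b t : ℝ} (ha : 0 < a) (hb : 0 < b) (ht : 0 < t) :
    ∫ τ in (0:ℝ)..t, (t - τ) ^ (a - 1) * τ ^ (b - 1) =
      Real.Gamma a * Real.Gamma b / Real.Gamma (a + b) * t ^ (a + b - 1) := by
  have hscaled := Complex.betaIntegral_scaled (b : ℂ) (a : ℂ) ht
  have hGG := Complex.Gamma_mul_Gamma_eq_betaIntegral
    (by simpa using hb : 0 < Complex.re (b:ℂ)) (by simpa using ha : 0 < Complex.re (a:ℂ))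
  have hcoe : ((∫ τ in (0:ℝ)..t, (t - τ) ^ (a - 1) * τ ^ (b - 1) : ℝ) : ℂ)
      = ∫ τ in (0:ℝ)..t, (τ:ℂ) ^ ((b:ℂ) - 1) * ((t:ℂ) - τ) ^ ((a:ℂ) - 1) := by
    rw [← intervalIntegral.integral_ofReal]
    apply intervalIntegral.integral_congr
    intro τ hτ
    rw [Set.uIcc_of_le ht.le] at hτ
    have h1 : (0:ℝ) ≤ t - τ := by linarith [hτ.2]
    have h2 : (0:ℝ) ≤ τ := hτ.1
    push_cast
    rw [Complex.ofReal_cpow h1, Complex.ofReal_cpow h2]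
    push_cast
    ring
  have hGne : (Complex.Gamma ((b:ℂ) + a) : ℂ) ≠ 0 := by
    rw [show ((b:ℂ) + a) = ((b + a : ℝ) : ℂ) by push_cast; ring, Complex.Gamma_ofReal]
    exact_mod_cast (Real.Gamma_pos_of_pos (by positivity)).ne'
  have hbeta : Complex.betaIntegral (b:ℂ) (a:ℂ)
      = Complex.Gamma (b:ℂ) * Complex.Gamma (a:ℂ) / Complex.Gamma ((b:ℂ) + a) := by
    field_simp [hGG]
    rw [hGG]; ring
  rw [hscaled, hbeta] at hcoe
  have ht' : ((t:ℂ)) ^ ((b:ℂ) + a - 1) = ((t ^ (a + b - 1) : ℝ) : ℂ) := by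
    rw [Complex.ofReal_cpow ht.le]
    push_cast
    ring_nf
  rw [ht'] at hcoe
  have : ((∫ τ in (0:ℝ)..t, (t - τ) ^ (a - 1) * τ ^ (b - 1) : ℝ) : ℂ)
      = ((Real.Gamma a * Real.Gamma b / Real.Gamma (a + b) * t ^ (a + b - 1) : ℝ) : ℂ) := by
    rw [hcoe]
    rw [show ((b:ℂ) + a) = ((b + a : ℝ) : ℂ) by push_cast; ring]
    rw [Complex.Gamma_ofReal, Complex.Gamma_ofReal, Complex.Gamma_ofReal]
    push_cast
    rw [show b + a = a + b by ring]
    ring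
  exact_mod_cast this

lemma measurable_rpow_aux (c t r : ℝ) : Measurable fun τ : ℝ => (c - τ * t) ^ r := by
  fun_prop

lemma rpow_bound {x t r : ℝ} (hx1 : t/2 ≤ x) (hx2 : x ≤ t) (ht : 0 < t) :
    x ^ r ≤ max (t ^ r) ((t/2) ^ r) := by
  rcases le_or_gt 0 r with hr | hr
  · exact le_max_of_le_left (Real.rpow_le_rpow (by linarith) hx2 hr)
  · exact le_max_of_le_right (Real.rpow_le_rpow_of_nonpos (by linarith) hx1 hr.le)

lemma betaIntegrableOn {a b t : ℝ} (ha : 0 < a) (hb : 0 < b) (ht : 0 < t) :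
    MeasureTheory.IntegrableOn (fun τ => (t - τ) ^ (a - 1) * τ ^ (b - 1)) (Set.Ioo 0 t) := by
  have hmeas : Measurable fun τ : ℝ => (t - τ) ^ (a - 1) := by fun_prop
  have hmeas' : Measurable fun τ : ℝ => (τ : ℝ) ^ (b - 1) := by fun_prop
  have h1 : MeasureTheory.IntegrableOn (fun τ => (t - τ) ^ (a - 1) * τ ^ (b - 1))
      (Set.Ioc 0 (t/2)) := by
    have hg : MeasureTheory.IntegrableOn (fun τ : ℝ => τ ^ (b - 1)) (Set.Ioc 0 (t/2)) := by
      rw [← intervalIntegrable_iff_integrableOn_Ioc_of_le (by linarith)]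
      exact intervalIntegral.intervalIntegrable_rpow' (by linarith)
    apply MeasureTheory.Integrable.bdd_mul hg (c := max (t ^ (a-1)) ((t/2) ^ (a-1)))
      (hmeas.aestronglyMeasurable.restrict)
    rw [MeasureTheory.ae_restrict_iff' measurableSet_Ioc]
    apply Filter.Eventually.of_forall
    intro x hx
    rw [Real.norm_of_nonneg (Real.rpow_nonneg (by linarith [hx.1, hx.2]) _)]
    exact rpow_bound (by linarith [hx.2]) (by linarith [hx.1]) ht
  have h2 : MeasureTheory.IntegrableOn (fun τ => (t - τ) ^ (a - 1) * τ ^ (b - 1))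
      (Set.Ioc (t/2) t) := by
    have hg : MeasureTheory.IntegrableOn (fun τ : ℝ => (t - τ) ^ (a - 1)) (Set.Ioc (t/2) t) := by
      rw [← intervalIntegrable_iff_integrableOn_Ioc_of_le (by linarith)]
      have := (intervalIntegral.intervalIntegrable_rpow' (r := a - 1)
        (by linarith) (a := 0) (b := t/2)).comp_sub_left t
      have h2 : t - t/2 = t/2 := by ring
      have h3 : t - 0 = t := by ring
      rw [h2, h3] at this
      exact this.symm
    have := MeasureTheory.Integrable.bdd_mul hg (f := fun τ : ℝ => τ ^ (b - 1))
      (c := max (t ^ (b-1)) ((t/2) ^ (b-1))) (hmeas'.aestronglyMeasurable.restrict) ?_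
    · apply this.congr
      apply Filter.Eventually.of_forall
      intro x; ring
    rw [MeasureTheory.ae_restrict_iff' measurableSet_Ioc]
    apply Filter.Eventually.of_forall
    intro x hx
    rw [Real.norm_of_nonneg (Real.rpow_nonneg (by linarith [hx.1]) _)]
    exact rpow_bound hx.1.le hx.2 ht
  have : Set.Ioo 0 t ⊆ Set.Ioc 0 (t/2) ∪ Set.Ioc (t/2) t := by
    rw [Set.Ioc_union_Ioc_eq_Ioc (by linarith) (by linarith)]
    exact Set.Ioo_subset_Ioc_self
  exact (h1.union h2).mono_set this

lemma summable_norm_kappa {α : ℝ} (h0 : 0 < α) {x : ℝ} (hx : 0 < x) :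
    Summable fun i : ℕ =>
      ‖(-1:ℝ) ^ i * x ^ ((i : ℝ) + α - 1) / ((i.factorial : ℝ) * Real.Gamma ((i : ℝ) + α))‖ := by
  refine ((summable_gamma_aux h0 hx).mul_left (x ^ (α - 1))).congr fun i => ?_
  have hA : (0:ℝ) < (i.factorial : ℝ) * Real.Gamma ((i : ℝ) + α) :=
    mul_pos (by positivity) (Real.Gamma_pos_of_pos (by positivity))
  have hxp : x ^ ((i : ℝ) + α - 1) = x ^ (α - 1) * x ^ i := by
    rw [← Real.rpow_natCast x i, ← Real.rpow_add hx]
    congr 1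
    ring
  rw [Real.norm_eq_abs, abs_div, abs_mul, abs_pow, abs_neg, abs_one, one_pow, one_mul,
    abs_of_pos (Real.rpow_pos_of_pos hx _), abs_of_pos hA, hxp]
  ring

lemma summable_norm_k {α : ℝ} (h1 : α < 1) {x : ℝ} (hx : 0 < x) :
    Summable fun j : ℕ =>
      ‖x ^ ((j : ℝ) - α) / ((j.factorial : ℝ) * Real.Gamma ((j : ℝ) + 1 - α))‖ := by
  refine ((summable_gamma_aux (β := 1 - α) (by linarith) hx).mul_left (x ^ (-α))).congr
    fun j => ?_
  have hj : (j:ℝ) + (1 - α) = (j:ℝ) + 1 - α := by ring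
  rw [hj]
  have hA : (0:ℝ) < (j.factorial : ℝ) * Real.Gamma ((j : ℝ) + 1 - α) := by
    apply mul_pos (by positivity) (Real.Gamma_pos_of_pos ?_)
    have : (0:ℝ) ≤ (j:ℝ) := Nat.cast_nonneg j
    linarith
  have hxp : x ^ ((j : ℝ) - α) = x ^ (-α) * x ^ j := by
    rw [← Real.rpow_natCast x j, ← Real.rpow_add hx]
    congr 1
    ring
  rw [Real.norm_eq_abs, abs_div, abs_of_pos (Real.rpow_pos_of_pos hx _), abs_of_pos hA, hxp]
  ring

lemma alt_choose_sum (n : ℕ) :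
    ∑ k ∈ Finset.range (n + 1), ((-1:ℝ) ^ k * (n.choose k : ℝ)) =
      if n = 0 then 1 else 0 := by
  rcases eq_or_ne n 0 with h | h
  · subst h; simp
  · rw [if_neg h]
    exact_mod_cast congrArg (fun z : ℤ => (z : ℝ)) (Int.alternating_sum_range_choose_of_ne h)

lemma row_sum (t : ℝ) (n : ℕ) :
    (∑ q ∈ Finset.HasAntidiagonal.antidiagonal n,
      ((-1:ℝ) ^ q.1 * t ^ (q.1 + q.2) /
        ((q.1.factorial : ℝ) * q.2.factorial * (q.1 + q.2).factorial)))
      = if n = 0 then t ^ 0 else 0 := by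
  rw [Finset.Nat.sum_antidiagonal_eq_sum_range_succ_mk]
  have step : ∀ k ∈ Finset.range (n + 1),
      ((-1:ℝ) ^ k * t ^ (k + (n - k)) /
        ((k.factorial : ℝ) * (n - k).factorial * (k + (n - k)).factorial))
      = (t ^ n / ((n.factorial : ℝ) * n.factorial)) * ((-1:ℝ) ^ k * (n.choose k : ℝ)) := by
    intro k hk
    have hkn : k ≤ n := Nat.lt_succ_iff.mp (Finset.mem_range.mp hk)
    rw [Nat.add_sub_cancel' hkn, Nat.cast_choose ℝ hkn]
    have h1 : (0:ℝ) < k.factorial := by positivity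
    have h2 : (0:ℝ) < (n - k).factorial := by positivity
    have h3 : (0:ℝ) < n.factorial := by positivity
    field_simp
  rw [Finset.sum_congr rfl step, ← Finset.mul_sum, alt_choose_sum]
  rcases eq_or_ne n 0 with h | h
  · subst h; simp
  · rw [if_neg h, if_neg h, mul_zero]

lemma summable_G {t : ℝ} (ht : 0 < t) :
    Summable (fun p : ℕ × ℕ => t ^ (p.1 + p.2) /
      ((p.1.factorial : ℝ) * p.2.factorial * (p.1 + p.2).factorial)) := by
  refine Summable.of_nonneg_of_le
    (fun p => div_nonneg (pow_nonneg ht.le _) (by positivity)) (fun p => ?_)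
    ((Real.summable_pow_div_factorial t).mul_of_nonneg (Real.summable_pow_div_factorial t)
      (fun i => div_nonneg (pow_nonneg ht.le _) (by positivity))
      (fun j => div_nonneg (pow_nonneg ht.le _) (by positivity)))
  rw [pow_add, div_mul_div_comm]
  apply div_le_div_of_nonneg_left (by positivity) (by positivity)
  exact le_mul_of_one_le_right (by positivity)
    (by exact_mod_cast Nat.one_le_iff_ne_zero.mpr (Nat.factorial_ne_zero _))

/-- Sonine's Bessel-type pair
`κ(t) = (√t)^{α−1} J_{α−1}(2√t)`, `k(t) = (√t)^{−α} I_{−α}(2√t)` (written via their power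
series) satisfies the Sonine condition. -/
theorem sonine_condition_bessel_kernels (α : ℝ) (h0 : 0 < α) (h1 : α < 1) :
    ∀ t, 0 < t →
      lconv
        (fun s => ∑' m : ℕ,
          (-1) ^ m * s ^ ((m : ℝ) + α - 1) / ((m.factorial : ℝ) * Real.Gamma ((m : ℝ) + α)))
        (fun s => ∑' m : ℕ,
          s ^ ((m : ℝ) - α) / ((m.factorial : ℝ) * Real.Gamma ((m : ℝ) + 1 - α))) t = 1 := by
  intro t ht
  -- the individual terms of the double series
  set F : ℕ × ℕ → ℝ → ℝ := fun p τ =>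
    ((-1:ℝ) ^ p.1 * (t - τ) ^ ((p.1 : ℝ) + α - 1) /
      ((p.1.factorial : ℝ) * Real.Gamma ((p.1 : ℝ) + α))) *
    (τ ^ ((p.2 : ℝ) - α) / ((p.2.factorial : ℝ) * Real.Gamma ((p.2 : ℝ) + 1 - α))) with hF
  have hApos : ∀ i : ℕ, (0:ℝ) < (i.factorial : ℝ) * Real.Gamma ((i : ℝ) + α) := fun i =>
    mul_pos (by positivity) (Real.Gamma_pos_of_pos (by positivity))
  have hBpos : ∀ j : ℕ, (0:ℝ) < (j.factorial : ℝ) * Real.Gamma ((j : ℝ) + 1 - α) := by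
    intro j
    apply mul_pos (by positivity) (Real.Gamma_pos_of_pos ?_)
    have : (0:ℝ) ≤ (j:ℝ) := Nat.cast_nonneg j
    linarith
  have hbpos : ∀ j : ℕ, (0:ℝ) < (j:ℝ) + 1 - α := by
    intro j; have : (0:ℝ) ≤ (j:ℝ) := Nat.cast_nonneg j; linarith
  -- the beta integral for each pair
  have hbeta : ∀ p : ℕ × ℕ,
      ∫ τ in Set.Ioo (0:ℝ) t, (t - τ) ^ ((p.1 : ℝ) + α - 1) * τ ^ ((p.2 : ℝ) - α)
        = Real.Gamma ((p.1 : ℝ) + α) * Real.Gamma ((p.2 : ℝ) + 1 - α) /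
            ((p.1 + p.2).factorial : ℝ) * t ^ (p.1 + p.2) := by
    rintro ⟨i, j⟩
    rw [← MeasureTheory.integral_Ioc_eq_integral_Ioo, ← intervalIntegral.integral_of_le ht.le]
    have h := real_beta (a := (i:ℝ) + α) (b := (j:ℝ) + 1 - α) (by positivity) (hbpos j) ht
    rw [show (i:ℝ) + α + ((j:ℝ) + 1 - α) = ((i + j : ℕ) : ℝ) + 1 by push_cast; ring,
      Real.Gamma_nat_eq_factorial, show ((i + j : ℕ) : ℝ) + 1 - 1 = ((i + j : ℕ) : ℝ) by ring,
      Real.rpow_natCast] at h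
    rw [← h]
    apply intervalIntegral.integral_congr
    intro τ _
    simp only
    rw [show ((j:ℝ) + 1 - α - 1) = (j:ℝ) - α by ring]
  -- integrability of each term
  have hint : ∀ p : ℕ × ℕ, MeasureTheory.IntegrableOn (F p) (Set.Ioo 0 t) := by
    rintro ⟨i, j⟩
    have h := (betaIntegrableOn (a := (i:ℝ) + α) (b := (j:ℝ) + 1 - α)
      (by positivity) (hbpos j) ht).const_mul
      ((-1:ℝ) ^ i / (((i.factorial : ℝ) * Real.Gamma ((i : ℝ) + α)) *
        ((j.factorial : ℝ) * Real.Gamma ((j : ℝ) + 1 - α))))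
    apply h.congr
    apply Filter.Eventually.of_forall
    intro τ
    simp only [hF]
    rw [show ((j:ℝ) + 1 - α - 1) = (j:ℝ) - α by ring]
    ring
  -- value of each integral
  have hval : ∀ p : ℕ × ℕ, (∫ τ in Set.Ioo (0:ℝ) t, F p τ)
      = (-1:ℝ) ^ p.1 * t ^ (p.1 + p.2) /
        ((p.1.factorial : ℝ) * p.2.factorial * (p.1 + p.2).factorial) := by
    rintro ⟨i, j⟩
    have heq : ∀ τ : ℝ, F (i, j) τ =
        ((-1:ℝ) ^ i / (((i.factorial : ℝ) * Real.Gamma ((i : ℝ) + α)) *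
          ((j.factorial : ℝ) * Real.Gamma ((j : ℝ) + 1 - α)))) *
        ((t - τ) ^ ((i : ℝ) + α - 1) * τ ^ ((j : ℝ) - α)) := by
      intro τ; simp only [hF]; ring
    rw [MeasureTheory.setIntegral_congr_fun measurableSet_Ioo fun τ _ => heq τ,
      MeasureTheory.integral_const_mul, hbeta (i, j)]
    have g1 := (Real.Gamma_pos_of_pos (show (0:ℝ) < (i:ℝ) + α by positivity)).ne'
    have g2 := (Real.Gamma_pos_of_pos (hbpos j)).ne'
    have f1 : ((i.factorial : ℝ)) ≠ 0 := by positivity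
    have f2 : ((j.factorial : ℝ)) ≠ 0 := by positivity
    have f3 : (((i + j).factorial : ℝ)) ≠ 0 := by positivity
    field_simp
  -- value of each norm integral
  have hnormval : ∀ p : ℕ × ℕ, (∫ τ in Set.Ioo (0:ℝ) t, ‖F p τ‖)
      = t ^ (p.1 + p.2) /
        ((p.1.factorial : ℝ) * p.2.factorial * (p.1 + p.2).factorial) := by
    rintro ⟨i, j⟩
    have heq : ∀ τ ∈ Set.Ioo (0:ℝ) t, ‖F (i, j) τ‖ =
        (1 / (((i.factorial : ℝ) * Real.Gamma ((i : ℝ) + α)) *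
          ((j.factorial : ℝ) * Real.Gamma ((j : ℝ) + 1 - α)))) *
        ((t - τ) ^ ((i : ℝ) + α - 1) * τ ^ ((j : ℝ) - α)) := by
      intro τ hτ
      have h1 : (0:ℝ) ≤ t - τ := by linarith [hτ.2]
      have h2 : (0:ℝ) ≤ τ := hτ.1.le
      simp only [hF, Real.norm_eq_abs, abs_mul, abs_div, abs_pow, abs_neg, abs_one, one_pow,
        one_mul, abs_of_nonneg (Real.rpow_nonneg h1 _), abs_of_nonneg (Real.rpow_nonneg h2 _),
        abs_of_pos (hApos i), abs_of_pos (hBpos j)]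
      ring
    rw [MeasureTheory.setIntegral_congr_fun measurableSet_Ioo heq,
      MeasureTheory.integral_const_mul, hbeta (i, j)]
    have g1 := (Real.Gamma_pos_of_pos (show (0:ℝ) < (i:ℝ) + α by positivity)).ne'
    have g2 := (Real.Gamma_pos_of_pos (hbpos j)).ne'
    have f1 : ((i.factorial : ℝ)) ≠ 0 := by positivity
    have f2 : ((j.factorial : ℝ)) ≠ 0 := by positivity
    have f3 : (((i + j).factorial : ℝ)) ≠ 0 := by positivity
    field_simp
  -- summability of the norm integrals
  have hnsum : Summable fun p : ℕ × ℕ => ∫ τ in Set.Ioo (0:ℝ) t, ‖F p τ‖ :=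
    (summable_G ht).congr fun p => (hnormval p).symm
  -- main computation
  show lconv _ _ t = 1
  rw [lconv]
  rw [intervalIntegral.integral_of_le ht.le, MeasureTheory.integral_Ioc_eq_integral_Ioo]
  have hpt : ∀ τ ∈ Set.Ioo (0:ℝ) t,
      ((fun s => ∑' m : ℕ,
          (-1) ^ m * s ^ ((m : ℝ) + α - 1) / ((m.factorial : ℝ) * Real.Gamma ((m : ℝ) + α)))
        (t - τ)) *
      ((fun s => ∑' m : ℕ,
          s ^ ((m : ℝ) - α) / ((m.factorial : ℝ) * Real.Gamma ((m : ℝ) + 1 - α))) τ)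
      = ∑' p : ℕ × ℕ, F p τ := by
    intro τ hτ
    simp only
    exact tsum_mul_tsum_of_summable_norm
      (summable_norm_kappa h0 (by linarith [hτ.2] : (0:ℝ) < t - τ))
      (summable_norm_k h1 hτ.1)
  rw [MeasureTheory.setIntegral_congr_fun measurableSet_Ioo hpt,
    ← MeasureTheory.integral_tsum_of_summable_integral_norm hint hnsum,
    tsum_congr hval]
  -- now a pure double-series computation
  set c : ℕ × ℕ → ℝ := fun p => (-1:ℝ) ^ p.1 * t ^ (p.1 + p.2) /
    ((p.1.factorial : ℝ) * p.2.factorial * (p.1 + p.2).factorial) with hc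
  have hcsum : Summable c := by
    apply Summable.of_norm
    refine (summable_G ht).congr fun p => ?_
    simp [hc, Real.norm_eq_abs, abs_div, abs_mul, abs_pow, abs_of_nonneg ht.le, Nat.abs_cast]
  have hsig := Summable.tsum_sigma' (γ := fun n : ℕ => {x // x ∈ Finset.HasAntidiagonal.antidiagonal n})
    (f := fun x => c (Finset.HasAntidiagonal.sigmaAntidiagonalEquivProd x))
    (fun n => (hasSum_fintype _).summable)
    ((Equiv.summable_iff Finset.HasAntidiagonal.sigmaAntidiagonalEquivProd).mpr hcsum)
  rw [← Equiv.tsum_eq Finset.HasAntidiagonal.sigmaAntidiagonalEquivProd c, hsig]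
  have hrow : ∀ n : ℕ,
      (∑' x : {x // x ∈ Finset.HasAntidiagonal.antidiagonal n}, c (Finset.HasAntidiagonal.sigmaAntidiagonalEquivProd ⟨n, x⟩))
      = if n = 0 then t ^ 0 else 0 := by
    intro n
    have : (fun x : {x // x ∈ Finset.HasAntidiagonal.antidiagonal n} =>
        c (Finset.HasAntidiagonal.sigmaAntidiagonalEquivProd ⟨n, x⟩)) = fun x : {x // x ∈ Finset.HasAntidiagonal.antidiagonal n} => c ↑x := rfl
    rw [this, Finset.tsum_subtype, hc]
    exact row_sum t n
  rw [tsum_congr hrow]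
  simp only [pow_zero]
  exact tsum_ite_eq 0 (fun _ => (1:ℝ))
end

section
/- Let 0 < α < 1 and let (a_m)_{m≥0}, (b_m)_{m≥0} be real sequences with a_0 ≠ 0 such that the power series κ₁(t) = Σ_{m=0}^∞ a_m t^m and k₁(t) = Σ_{m=0}^∞ b_m t^m converge for all t ≥ 0, and suppose the coefficients satisfy the triangular system a_0 b_0 = 1 and Σ_{m=0}^n Γ(m+1−α) Γ(α+n−m) a_{n−m} b_m = 0 for all n ≥ 1. Then the functions κ(t) = (t^{α−1}/Γ(α)) κ₁(t) and k(t) = (t^{−α}/Γ(1−α)) k₁(t) satisfy the Sonine condition (κ ∗ k)(t) = 1 for all t > 0. -/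
open MeasureTheory intervalIntegral Real Set

lemma abs_summable_of_all (a : ℕ → ℝ) (h : ∀ t : ℝ, 0 ≤ t → Summable fun m => a m * t ^ m)
    {t : ℝ} (ht : 0 ≤ t) : Summable fun m => |a m| * t ^ m := by
  have h2 := h (t + 1) (by linarith)
  have h3 : Filter.Tendsto (fun m => |a m * (t + 1) ^ m|) Filter.atTop (nhds 0) := by
    simpa using (h2.tendsto_atTop_zero).abs
  obtain ⟨C, hC⟩ := h3.bddAbove_range
  simp only [upperBounds, Set.mem_range, forall_exists_index] at hC
  have hC' : ∀ m, |a m| * (t + 1) ^ m ≤ C := by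
    intro m
    have := hC m rfl
    rwa [abs_mul, abs_pow, abs_of_nonneg (by linarith : (0:ℝ) ≤ t + 1)] at this
  have hr : t / (t + 1) < 1 := by
    rw [div_lt_one (by linarith)]; linarith
  refine Summable.of_nonneg_of_le (fun m => by positivity)
    (fun m => ?_) (((summable_geometric_of_lt_one (by positivity) hr)).mul_left C)
  have : |a m| * t ^ m = (|a m| * (t + 1) ^ m) * (t / (t + 1)) ^ m := by
    rw [div_pow]
    field_simp
  rw [this]
  exact mul_le_mul_of_nonneg_right (hC' m) (by positivity)

lemma betaReal {u v t : ℝ} (hu : 0 < u) (hv : 0 < v) (ht : 0 < t) :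
    ∫ τ in (0:ℝ)..t, τ ^ (u - 1) * (t - τ) ^ (v - 1) =
      t ^ (u + v - 1) * (Real.Gamma u * Real.Gamma v / Real.Gamma (u + v)) := by
  have hC := Complex.betaIntegral_scaled (u : ℂ) (v : ℂ) ht
  have hG := Complex.Gamma_mul_Gamma_eq_betaIntegral
    (s := (u:ℂ)) (t := (v:ℂ)) (by simpa using hu) (by simpa using hv)
  have hGuv : Real.Gamma (u + v) ≠ 0 := (Real.Gamma_pos_of_pos (by linarith)).ne'
  have hβ : Complex.betaIntegral u v =
      ((Real.Gamma u * Real.Gamma v / Real.Gamma (u + v) : ℝ) : ℂ) := by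
    have h1 : Complex.Gamma ((u:ℂ) + v) ≠ 0 := by
      rw [show ((u:ℂ) + v) = ((u + v : ℝ) : ℂ) by push_cast; ring, Complex.Gamma_ofReal]
      exact_mod_cast hGuv
    push_cast
    rw [← Complex.Gamma_ofReal u, ← Complex.Gamma_ofReal v, ← Complex.Gamma_ofReal (u + v),
      Complex.ofReal_add, eq_div_iff h1, hG]
    ring
  -- identify the complex integral with the real one
  have hint : ∫ x in (0:ℝ)..t, (x : ℂ) ^ ((u:ℂ) - 1) * ((t : ℂ) - x) ^ ((v:ℂ) - 1) =
      ((∫ τ in (0:ℝ)..t, τ ^ (u - 1) * (t - τ) ^ (v - 1) : ℝ) : ℂ) := by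
    rw [← intervalIntegral.integral_ofReal]
    rw [intervalIntegral.integral_of_le ht.le, intervalIntegral.integral_of_le ht.le]
    refine setIntegral_congr_fun measurableSet_Ioc fun x hx => ?_
    have hx0 : 0 ≤ x := hx.1.le
    have hx1 : 0 ≤ t - x := by linarith [hx.2]
    rw [Complex.ofReal_mul, Complex.ofReal_cpow hx0, Complex.ofReal_cpow hx1]
    push_cast
    ring
  rw [hint, hβ] at hC
  have : ((t : ℂ)) ^ ((u:ℂ) + v - 1) = ((t ^ (u + v - 1) : ℝ) : ℂ) := by
    rw [Complex.ofReal_cpow ht.le]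
    push_cast
    ring_nf
  rw [this] at hC
  exact_mod_cast hC

lemma betaIntegrable {u v t : ℝ} (hu : 0 < u) (hv : 0 < v) (ht : 0 < t) :
    IntervalIntegrable (fun τ => τ ^ (u - 1) * (t - τ) ^ (v - 1)) volume 0 t := by
  have h1 : IntervalIntegrable (fun τ => τ ^ (u - 1) * (t - τ) ^ (v - 1)) volume 0 (t/2) := by
    apply IntervalIntegrable.mul_continuousOn
    · exact intervalIntegral.intervalIntegrable_rpow' (by linarith)
    · apply ContinuousOn.rpow_const (continuousOn_const.sub continuousOn_id)
      intro x hx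
      rw [uIcc_of_le (by linarith : (0:ℝ) ≤ t/2)] at hx
      exact Or.inl (by intro h; simp only [Pi.sub_apply, id_eq] at h; nlinarith [hx.2])
  have h2 : IntervalIntegrable (fun τ => τ ^ (u - 1) * (t - τ) ^ (v - 1)) volume (t/2) t := by
    have hbase : IntervalIntegrable (fun x : ℝ => x ^ (v - 1)) volume (t - t/2) (t - t) :=
      intervalIntegral.intervalIntegrable_rpow' (by linarith)
    have h3 : IntervalIntegrable (fun τ : ℝ => (t - τ) ^ (v - 1)) volume (t/2) t := by
      simpa using hbase.comp_sub_left t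
    apply h3.continuousOn_mul
    apply ContinuousOn.rpow_const continuousOn_id
    intro x hx
    rw [uIcc_of_le (by linarith : t/2 ≤ t)] at hx
    exact Or.inl (by simp only [id]; intro h; nlinarith [hx.1])
  exact h1.trans h2

lemma rpow_mul_npow {x : ℝ} (hx : 0 ≤ x) {r : ℝ} (hr : r ≠ 0) (m : ℕ) (hrm : r + m ≠ 0) :
    x ^ r * x ^ m = x ^ (r + m) := by
  rcases hx.eq_or_lt with h | h
  · rw [← h, Real.zero_rpow hr, Real.zero_rpow hrm, zero_mul]
  · rw [← Real.rpow_natCast x m, ← Real.rpow_add h]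

noncomputable def sonF (α t : ℝ) (a b : ℕ → ℝ) (p : ℕ × ℕ) (τ : ℝ) : ℝ :=
  (t - τ) ^ (α - 1) / Real.Gamma α * (τ ^ (-α) / Real.Gamma (1 - α)) *
    (a p.1 * (t - τ) ^ p.1 * (b p.2 * τ ^ p.2))

lemma sonF_eq {α t : ℝ} (h0 : 0 < α) (h1 : α < 1) (a b : ℕ → ℝ) (p : ℕ × ℕ)
    {τ : ℝ} (hτ : τ ∈ Set.Ioc (0:ℝ) t) :
    sonF α t a b p τ = (a p.1 * b p.2 / (Real.Gamma α * Real.Gamma (1 - α))) *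
      (τ ^ ((1 - α + p.2) - 1) * (t - τ) ^ ((α + p.1) - 1)) := by
  have hx1 : (0:ℝ) ≤ t - τ := by linarith [hτ.2]
  have hx2 : (0:ℝ) ≤ τ := hτ.1.le
  have hne1 : α - 1 + (p.1 : ℝ) ≠ 0 := by
    rcases Nat.eq_zero_or_pos p.1 with h | h
    · simp [h]; intro hc; norm_num at hc; linarith
    · have : (1:ℝ) ≤ p.1 := by exact_mod_cast h
      exact ne_of_gt (by linarith)
  have hne2 : -α + (p.2 : ℝ) ≠ 0 := by
    rcases Nat.eq_zero_or_pos p.2 with h | h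
    · simp [h]; linarith
    · have : (1:ℝ) ≤ p.2 := by exact_mod_cast h
      exact ne_of_gt (by linarith)
  have e1 : (t - τ) ^ (α - 1) * (t - τ) ^ p.1 = (t - τ) ^ (α - 1 + p.1) :=
    rpow_mul_npow hx1 (by intro hc; linarith [hc]; ) _ hne1
  have e2 : τ ^ (-α) * τ ^ p.2 = τ ^ (-α + p.2) := by
    refine rpow_mul_npow hx2 (by intro hc; linarith [neg_eq_zero.mp hc]) _ hne2
  have e3 : (1 - α + (p.2:ℝ)) - 1 = -α + (p.2:ℝ) := by ring
  have e4 : (α + (p.1:ℝ)) - 1 = α - 1 + (p.1:ℝ) := by ring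
  rw [sonF, e3, e4, ← e1, ← e2]
  ring

variable {α t : ℝ} {a b : ℕ → ℝ}

lemma sonF_integrableOn (h0 : 0 < α) (h1 : α < 1) (ht : 0 < t) (a b : ℕ → ℝ) (p : ℕ × ℕ) :
    MeasureTheory.IntegrableOn (sonF α t a b p) (Set.Ioc 0 t) volume := by
  have hu : (0:ℝ) < 1 - α + p.2 := by
    have : (0:ℝ) ≤ p.2 := Nat.cast_nonneg _
    linarith
  have hv : (0:ℝ) < α + p.1 := by
    have : (0:ℝ) ≤ p.1 := Nat.cast_nonneg _
    linarith
  have hb := (betaIntegrable hu hv ht).1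
  have hb2 := hb.const_mul (a p.1 * b p.2 / (Real.Gamma α * Real.Gamma (1 - α)))
  exact MeasureTheory.IntegrableOn.congr_fun hb2
    (fun τ hτ => (sonF_eq h0 h1 a b p hτ).symm) measurableSet_Ioc

lemma sonF_integral (h0 : 0 < α) (h1 : α < 1) (ht : 0 < t) (a b : ℕ → ℝ) (p : ℕ × ℕ) :
    ∫ τ in Set.Ioc (0:ℝ) t, sonF α t a b p τ =
      (a p.1 * b p.2 / (Real.Gamma α * Real.Gamma (1 - α))) *
        (t ^ (p.1 + p.2) *
          (Real.Gamma (1 - α + p.2) * Real.Gamma (α + p.1) / (Nat.factorial (p.1 + p.2) : ℝ))) := by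
  have hu : (0:ℝ) < 1 - α + p.2 := by
    have : (0:ℝ) ≤ p.2 := Nat.cast_nonneg _
    linarith
  have hv : (0:ℝ) < α + p.1 := by
    have : (0:ℝ) ≤ p.1 := Nat.cast_nonneg _
    linarith
  rw [MeasureTheory.setIntegral_congr_fun measurableSet_Ioc
    (fun τ hτ => sonF_eq h0 h1 a b p hτ)]
  rw [MeasureTheory.integral_const_mul, ← intervalIntegral.integral_of_le ht.le,
    betaReal hu hv ht]
  have he : (1 - α + (p.2:ℝ)) + (α + (p.1:ℝ)) - 1 = ((p.1 + p.2 : ℕ) : ℝ) := by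
    push_cast; ring
  have he2 : (1 - α + (p.2:ℝ)) + (α + (p.1:ℝ)) = ((p.1 + p.2 : ℕ) : ℝ) + 1 := by
    push_cast; ring
  rw [he, he2, Real.rpow_natCast, Real.Gamma_nat_eq_factorial]

lemma sonF_norm_integral_le (h0 : 0 < α) (h1 : α < 1) (ht : 0 < t) (a b : ℕ → ℝ) (p : ℕ × ℕ) :
    ∫ τ in Set.Ioc (0:ℝ) t, ‖sonF α t a b p τ‖ ≤
      |a p.1| * t ^ p.1 * (|b p.2| * t ^ p.2) := by
  have hΓα : 0 < Real.Gamma α := Real.Gamma_pos_of_pos h0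
  have hΓ1α : 0 < Real.Gamma (1 - α) := Real.Gamma_pos_of_pos (by linarith)
  -- ‖sonF‖ equals sonF with |a|, |b|
  have habs : ∀ τ ∈ Set.Ioc (0:ℝ) t,
      ‖sonF α t a b p τ‖ = sonF α t (fun m => |a m|) (fun m => |b m|) p τ := by
    intro τ hτ
    have hx1 : (0:ℝ) ≤ t - τ := by linarith [hτ.2]
    have hx2 : (0:ℝ) ≤ τ := hτ.1.le
    simp only [sonF, Real.norm_eq_abs, abs_mul, abs_div,
      abs_of_nonneg (Real.rpow_nonneg hx1 _), abs_of_nonneg (Real.rpow_nonneg hx2 _),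
      abs_of_nonneg (pow_nonneg hx1 _), abs_of_nonneg (pow_nonneg hx2 _),
      abs_of_nonneg hΓα.le, abs_of_nonneg hΓ1α.le, abs_abs]
  -- bound function
  set B : ℝ → ℝ := fun τ =>
    (t - τ) ^ (α - 1) / Real.Gamma α * (τ ^ (-α) / Real.Gamma (1 - α)) *
      (|a p.1| * t ^ p.1 * (|b p.2| * t ^ p.2)) with hB
  have hBint : MeasureTheory.IntegrableOn B (Set.Ioc 0 t) volume := by
    have hb := (betaIntegrable (u := 1 - α) (v := α) (by linarith) h0 ht).1
    have hb2 := hb.const_mul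
      ((|a p.1| * t ^ p.1 * (|b p.2| * t ^ p.2)) / (Real.Gamma α * Real.Gamma (1 - α)))
    refine MeasureTheory.IntegrableOn.congr_fun hb2 (fun τ hτ => ?_) measurableSet_Ioc
    simp only [hB]
    rw [show (1:ℝ) - α - 1 = -α by ring]
    ring
  have hle : ∀ τ ∈ Set.Ioc (0:ℝ) t, ‖sonF α t a b p τ‖ ≤ B τ := by
    intro τ hτ
    have hx1 : (0:ℝ) ≤ t - τ := by linarith [hτ.2]
    have hx2 : (0:ℝ) ≤ τ := hτ.1.le
    rw [habs τ hτ]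
    simp only [sonF, hB]
    have h1' : (t - τ) ^ p.1 ≤ t ^ p.1 := pow_le_pow_left₀ hx1 (by linarith [hτ.1]) _
    have h2' : τ ^ p.2 ≤ t ^ p.2 := pow_le_pow_left₀ hx2 hτ.2 _
    refine mul_le_mul_of_nonneg_left ?_
      (mul_nonneg (div_nonneg (Real.rpow_nonneg hx1 _) hΓα.le)
        (div_nonneg (Real.rpow_nonneg hx2 _) hΓ1α.le))
    have ha' : (0:ℝ) ≤ |a p.1| := abs_nonneg _
    have hb' : (0:ℝ) ≤ |b p.2| := abs_nonneg _
    gcongr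
  have hint : MeasureTheory.IntegrableOn (fun τ => ‖sonF α t a b p τ‖) (Set.Ioc 0 t) volume :=
    (sonF_integrableOn h0 h1 ht a b p).norm
  calc ∫ τ in Set.Ioc (0:ℝ) t, ‖sonF α t a b p τ‖
      ≤ ∫ τ in Set.Ioc (0:ℝ) t, B τ :=
        MeasureTheory.setIntegral_mono_on hint hBint measurableSet_Ioc hle
    _ = |a p.1| * t ^ p.1 * (|b p.2| * t ^ p.2) := by
        rw [hB]
        have e : ∀ τ ∈ Set.Ioc (0:ℝ) t,
            (t - τ) ^ (α - 1) / Real.Gamma α * (τ ^ (-α) / Real.Gamma (1 - α)) *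
              (|a p.1| * t ^ p.1 * (|b p.2| * t ^ p.2)) =
            ((|a p.1| * t ^ p.1 * (|b p.2| * t ^ p.2)) / (Real.Gamma α * Real.Gamma (1 - α))) *
              (τ ^ ((1 - α) - 1) * (t - τ) ^ (α - 1)) := by
          intro τ hτ
          have e2 : (1 - α) - 1 = -α := by ring
          rw [e2]; ring
        rw [MeasureTheory.setIntegral_congr_fun measurableSet_Ioc e,
          MeasureTheory.integral_const_mul, ← intervalIntegral.integral_of_le ht.le,
          betaReal (by linarith) h0 ht]
        have e3 : (1 - α) + α - 1 = (0:ℝ) := by ring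
        have e4 : (1 - α) + α = (1:ℝ) := by ring
        rw [e3, e4, Real.rpow_zero, Real.Gamma_one]
        rw [one_mul, div_one, div_mul_eq_mul_div, mul_comm (Real.Gamma (1-α)),
          mul_div_assoc, div_self (by positivity : Real.Gamma α * Real.Gamma (1-α) ≠ 0), mul_one]

lemma diag_sum (n : ℕ) (α t : ℝ) (a b : ℕ → ℝ) :
    ∑ p ∈ Finset.HasAntidiagonal.antidiagonal n,
      (a p.1 * b p.2 / (Real.Gamma α * Real.Gamma (1 - α)) *
        (t ^ (p.1 + p.2) * (Real.Gamma (1 - α + p.2) * Real.Gamma (α + p.1) /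
          (Nat.factorial (p.1 + p.2) : ℝ)))) =
    t ^ n / (Real.Gamma α * Real.Gamma (1 - α) * (Nat.factorial n : ℝ)) *
      ∑ m ∈ Finset.range (n + 1),
        Real.Gamma ((m : ℝ) + 1 - α) * Real.Gamma (α + (n : ℝ) - (m : ℝ)) * a (n - m) * b m := by
  rw [Finset.Nat.sum_antidiagonal_eq_sum_range_succ_mk]
  rw [← Finset.sum_range_reflect
    (fun m => Real.Gamma ((m:ℝ) + 1 - α) * Real.Gamma (α + (n:ℝ) - (m:ℝ)) * a (n - m) * b m)
    (n + 1)]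
  rw [Finset.mul_sum]
  refine Finset.sum_congr rfl fun k hk => ?_
  have hk' : k ≤ n := Nat.lt_succ_iff.mp (Finset.mem_range.mp hk)
  simp only [Nat.add_sub_cancel]
  rw [Nat.add_sub_cancel' hk', Nat.sub_sub_self hk', Nat.cast_sub hk']
  rw [show 1 - α + ((n:ℝ) - k) = ((n:ℝ) - k) + 1 - α by ring,
    show α + (n:ℝ) - ((n:ℝ) - (k:ℝ)) = α + (k:ℝ) by ring]
  ring

set_option maxHeartbeats 1600000 in
/-- Sonine's class of kernels `κ(t) = h_α(t) κ₁(t)`, `k(t) = h_{1−α}(t) k₁(t)` with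
analytic `κ₁, k₁` whose coefficients satisfy the triangular system \eqref{3-5} of the paper
satisfies the Sonine condition. -/
theorem sonine_condition_analytic_class (α : ℝ) (h0 : 0 < α) (h1 : α < 1)
    (a b : ℕ → ℝ) (ha0 : a 0 ≠ 0)
    (hconva : ∀ t : ℝ, 0 ≤ t → Summable fun m => a m * t ^ m)
    (hconvb : ∀ t : ℝ, 0 ≤ t → Summable fun m => b m * t ^ m)
    (hab0 : a 0 * b 0 = 1)
    (hab : ∀ n : ℕ, 1 ≤ n →
      ∑ m ∈ Finset.range (n + 1),
        Real.Gamma ((m : ℝ) + 1 - α) * Real.Gamma (α + (n : ℝ) - (m : ℝ))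
          * a (n - m) * b m = 0) :
    ∀ t, 0 < t →
      lconv (fun s => s ^ (α - 1) / Real.Gamma α * ∑' m : ℕ, a m * s ^ m)
            (fun s => s ^ (-α) / Real.Gamma (1 - α) * ∑' m : ℕ, b m * s ^ m) t = 1 := by
  intro t ht
  have hΓα : 0 < Real.Gamma α := Real.Gamma_pos_of_pos h0
  have hΓ1α : 0 < Real.Gamma (1 - α) := Real.Gamma_pos_of_pos (by linarith)
  have hpt : ∀ τ ∈ Set.Ioc (0:ℝ) t,
      (t - τ) ^ (α - 1) / Real.Gamma α * (∑' m : ℕ, a m * (t - τ) ^ m) *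
        (τ ^ (-α) / Real.Gamma (1 - α) * ∑' m : ℕ, b m * τ ^ m)
      = ∑' p : ℕ × ℕ, sonF α t a b p τ := by
    intro τ hτ
    have hx1 : (0:ℝ) ≤ t - τ := by linarith [hτ.2]
    have hx2 : (0:ℝ) ≤ τ := hτ.1.le
    have hA : Summable fun m => ‖a m * (t - τ) ^ m‖ :=
      (abs_summable_of_all a hconva hx1).congr fun m => by
        rw [Real.norm_eq_abs, abs_mul, abs_pow, abs_of_nonneg hx1]
    have hB : Summable fun m => ‖b m * τ ^ m‖ :=
      (abs_summable_of_all b hconvb hx2).congr fun m => by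
        rw [Real.norm_eq_abs, abs_mul, abs_pow, abs_of_nonneg hx2]
    rw [mul_mul_mul_comm, tsum_mul_tsum_of_summable_norm hA hB, ← tsum_mul_left]
    exact tsum_congr fun p => by simp only [sonF]
  have hIntOn : ∀ p : ℕ × ℕ,
      MeasureTheory.Integrable (sonF α t a b p) (volume.restrict (Set.Ioc 0 t)) :=
    fun p => sonF_integrableOn h0 h1 ht a b p
  have hprodA : Summable fun m => ‖|a m| * t ^ m‖ :=
    (abs_summable_of_all a hconva ht.le).congr fun m =>
      (Real.norm_of_nonneg (by positivity)).symm
  have hprodB : Summable fun m => ‖|b m| * t ^ m‖ :=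
    (abs_summable_of_all b hconvb ht.le).congr fun m =>
      (Real.norm_of_nonneg (by positivity)).symm
  have hprod : Summable fun p : ℕ × ℕ => |a p.1| * t ^ p.1 * (|b p.2| * t ^ p.2) :=
    summable_mul_of_summable_norm hprodA hprodB
  have hSnorm : Summable fun p : ℕ × ℕ => ∫ τ in Set.Ioc (0:ℝ) t, ‖sonF α t a b p τ‖ :=
    Summable.of_nonneg_of_le
      (fun p => MeasureTheory.integral_nonneg fun τ => norm_nonneg _)
      (fun p => sonF_norm_integral_le h0 h1 ht a b p) hprod
  have hkey := MeasureTheory.integral_tsum_of_summable_integral_norm hIntOn hSnorm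
  simp only [lconv]
  rw [intervalIntegral.integral_of_le ht.le,
    MeasureTheory.setIntegral_congr_fun measurableSet_Ioc hpt, ← hkey]
  have hval : ∀ p : ℕ × ℕ, (∫ τ in Set.Ioc (0:ℝ) t, sonF α t a b p τ) =
      (a p.1 * b p.2 / (Real.Gamma α * Real.Gamma (1 - α))) *
        (t ^ (p.1 + p.2) * (Real.Gamma (1 - α + p.2) * Real.Gamma (α + p.1) /
          (Nat.factorial (p.1 + p.2) : ℝ))) :=
    fun p => sonF_integral h0 h1 ht a b p
  rw [tsum_congr hval]
  set G : ℕ × ℕ → ℝ := fun p =>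
    (a p.1 * b p.2 / (Real.Gamma α * Real.Gamma (1 - α))) *
      (t ^ (p.1 + p.2) * (Real.Gamma (1 - α + p.2) * Real.Gamma (α + p.1) /
        (Nat.factorial (p.1 + p.2) : ℝ))) with hG
  have hGsum : Summable G := by
    refine Summable.of_norm_bounded hSnorm fun p => ?_
    rw [hG]
    simp only
    rw [← hval p]
    exact MeasureTheory.norm_integral_le_integral_norm _
  rw [← Finset.HasAntidiagonal.sigmaAntidiagonalEquivProd.tsum_eq G]
  have hsig : Summable (fun c : (Σ n : ℕ, {x // x ∈ Finset.HasAntidiagonal.antidiagonal n}) =>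
      G (Finset.HasAntidiagonal.sigmaAntidiagonalEquivProd c)) :=
    Finset.HasAntidiagonal.sigmaAntidiagonalEquivProd.summable_iff.mpr hGsum
  rw [Summable.tsum_sigma hsig]
  have hinner : ∀ n : ℕ, (∑' c : {x // x ∈ Finset.HasAntidiagonal.antidiagonal n},
      G (Finset.HasAntidiagonal.sigmaAntidiagonalEquivProd ⟨n, c⟩)) =
      t ^ n / (Real.Gamma α * Real.Gamma (1 - α) * (Nat.factorial n : ℝ)) *
        ∑ m ∈ Finset.range (n + 1),
          Real.Gamma ((m : ℝ) + 1 - α) * Real.Gamma (α + (n : ℝ) - (m : ℝ))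
            * a (n - m) * b m := by
    intro n
    have : (∑' c : {x // x ∈ Finset.HasAntidiagonal.antidiagonal n},
        G (Finset.HasAntidiagonal.sigmaAntidiagonalEquivProd ⟨n, c⟩)) =
        ∑ p ∈ Finset.HasAntidiagonal.antidiagonal n, G p := by
      simp only [Finset.HasAntidiagonal.sigmaAntidiagonalEquivProd_apply]
      exact Finset.tsum_subtype _ G
    rw [this, hG]
    exact diag_sum n α t a b
  rw [tsum_congr hinner]
  rw [tsum_eq_single 0 (fun n hn => by
    rw [hab n (Nat.one_le_iff_ne_zero.mpr hn), mul_zero])]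
  simp only [pow_zero, Nat.factorial_zero, Nat.cast_one, mul_one, zero_add,
    Finset.sum_range_one, Nat.cast_zero, Nat.sub_zero]
  rw [show α + (0:ℝ) - 0 = α by ring]
  field_simp
  linear_combination hab0
end

section
/- Let f(t) = t^p f₁(t) and g(t) = t^q g₁(t) with p > −1, q > −1 and f₁, g₁ continuous on [0,∞). Then the Laplace convolution f ∗ g belongs to C_{−1}(0,∞); more precisely, (f ∗ g)(t) = t^{p+q+1} h(t) for some function h continuous on [0,∞). In particular, for a kernel κ ∈ C_{−1}(0,∞), the general fractional integral 𝕀_{(κ)} f = κ ∗ f maps C_{−1}(0,∞) into C_{−1}(0,∞). -/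
open Set MeasureTheory Real

lemma beta_integrable_s17 {p q : ℝ} (hp : -1 < p) (hq : -1 < q) :
    IntervalIntegrable (fun s : ℝ => (1 - s) ^ p * s ^ q) volume 0 1 := by
  have hmeas : Measurable (fun s : ℝ => (1 - s) ^ p * s ^ q) :=
    ((measurable_const.sub measurable_id).pow measurable_const).mul
      (measurable_id.pow measurable_const)
  have h1 : IntervalIntegrable (fun s : ℝ => (1 - s) ^ p * s ^ q) volume 0 (1/2) := by
    have hg : IntervalIntegrable (fun s : ℝ => (max ((1/2:ℝ) ^ p) 1) * s ^ q) volume 0 (1/2) :=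
      (intervalIntegral.intervalIntegrable_rpow' hq).const_mul _
    refine hg.mono_fun' hmeas.aestronglyMeasurable ?_
    rw [Filter.EventuallyLE, ae_restrict_iff' measurableSet_uIoc]
    refine Filter.Eventually.of_forall fun s hs => ?_
    rw [Set.uIoc_of_le (by norm_num : (0:ℝ) ≤ 1/2)] at hs
    obtain ⟨hs0, hs12⟩ := hs
    have h1s : (0:ℝ) < 1 - s := by linarith
    have hsq : (0:ℝ) ≤ s ^ q := rpow_nonneg hs0.le q
    have habs : ‖(1 - s) ^ p * s ^ q‖ = (1 - s) ^ p * s ^ q := by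
      rw [Real.norm_eq_abs, abs_of_nonneg (mul_nonneg (rpow_nonneg h1s.le p) hsq)]
    rw [habs]
    refine mul_le_mul_of_nonneg_right ?_ hsq
    rcases le_or_gt 0 p with hp0 | hp0
    · exact le_trans (rpow_le_one h1s.le (by linarith) hp0) (le_max_right _ _)
    · exact le_trans (rpow_le_rpow_of_nonpos (by norm_num) (by linarith) hp0.le)
        (le_max_left _ _)
  have h2 : IntervalIntegrable (fun s : ℝ => (1 - s) ^ p * s ^ q) volume (1/2) 1 := by
    have hbase : IntervalIntegrable (fun s : ℝ => (1 - s) ^ p) volume (1/2) 1 := by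
      have := (intervalIntegral.intervalIntegrable_rpow' hp (a := 0) (b := 1/2)).comp_sub_left 1
      norm_num at this
      exact this.symm
    have hg : IntervalIntegrable (fun s : ℝ => (max ((1/2:ℝ) ^ q) 1) * (1 - s) ^ p)
        volume (1/2) 1 := hbase.const_mul _
    refine hg.mono_fun' hmeas.aestronglyMeasurable ?_
    rw [Filter.EventuallyLE, ae_restrict_iff' measurableSet_uIoc]
    refine Filter.Eventually.of_forall fun s hs => ?_
    rw [Set.uIoc_of_le (by norm_num : (1/2:ℝ) ≤ 1)] at hs
    obtain ⟨hs12, hs1⟩ := hs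
    have hs0 : (0:ℝ) < s := by linarith
    have h1s : (0:ℝ) ≤ 1 - s := by linarith
    have hps : (0:ℝ) ≤ (1 - s) ^ p := rpow_nonneg h1s p
    have habs : ‖(1 - s) ^ p * s ^ q‖ = (1 - s) ^ p * s ^ q := by
      rw [Real.norm_eq_abs, abs_of_nonneg (mul_nonneg hps (rpow_nonneg hs0.le q))]
    rw [habs, mul_comm ((1-s)^p) (s^q), mul_comm _ ((1-s)^p)] at *
    rw [mul_comm ((1-s)^p)]
    refine mul_le_mul_of_nonneg_right ?_ hps
    rcases le_or_gt 0 q with hq0 | hq0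
    · exact le_trans (rpow_le_one hs0.le hs1 hq0) (le_max_right _ _)
    · exact le_trans (rpow_le_rpow_of_nonpos (by norm_num) (by linarith) hq0.le)
        (le_max_left _ _)
  exact h1.trans h2

lemma key {f g f₁ g₁ : ℝ → ℝ} {p q : ℝ} (hp : -1 < p) (hq : -1 < q)
    (hf₁ : ContinuousOn f₁ (Set.Ici (0:ℝ))) (hg₁ : ContinuousOn g₁ (Set.Ici (0:ℝ)))
    (hf : ∀ t, 0 < t → f t = t ^ p * f₁ t) (hg : ∀ t, 0 < t → g t = t ^ q * g₁ t) :
    ∃ h : ℝ → ℝ, ContinuousOn h (Set.Ici (0:ℝ)) ∧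
      ∀ t, 0 < t → lconv f g t = t ^ (p + q + 1) * h t := by
  set F : ℝ → ℝ → ℝ :=
    fun t s => ((1 - s) ^ p * s ^ q) * (f₁ (t * (1 - s)) * g₁ (t * s)) with hF
  set h : ℝ → ℝ := fun t => ∫ s in (0:ℝ)..1, F t s with hh
  have hI : Set.uIoc (0:ℝ) 1 = Set.Ioc 0 1 := Set.uIoc_of_le zero_le_one
  -- continuity of the integrand in s, for fixed t ≥ 0
  have hcont_s : ∀ t : ℝ, 0 ≤ t → ContinuousOn (F t) (Set.Ioo 0 1) := by
    intro t ht
    apply ContinuousOn.mul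
    · apply ContinuousOn.mul
      · exact (continuous_const.sub continuous_id).continuousOn.rpow_const
          fun x hx => Or.inl (sub_ne_zero.mpr (ne_of_lt hx.2).symm)
      · exact continuousOn_id.rpow_const fun x hx => Or.inl (ne_of_gt hx.1)
    · apply ContinuousOn.mul
      · exact hf₁.comp (continuous_const.mul (continuous_const.sub continuous_id)).continuousOn
          fun x hx => mul_nonneg ht (by simp at hx ⊢; linarith [hx.2])
      · exact hg₁.comp (continuous_const.mul continuous_id).continuousOn
          fun x hx => mul_nonneg ht hx.1.le
  have hmeas : ∀ t : ℝ, 0 ≤ t →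
      AEStronglyMeasurable (F t) (volume.restrict (Set.uIoc (0:ℝ) 1)) := by
    intro t ht
    rw [hI, ← Measure.restrict_congr_set Ioo_ae_eq_Ioc]
    exact (hcont_s t ht).aestronglyMeasurable measurableSet_Ioo
  refine ⟨h, ?_, ?_⟩
  · -- continuity of h on [0,∞)
    intro t₀ ht₀
    have ht₀' : (0:ℝ) ≤ t₀ := ht₀
    obtain ⟨C₁, hC₁⟩ := (isCompact_Icc (a := (0:ℝ)) (b := t₀ + 1)).exists_bound_of_continuousOn
      (hf₁.mono fun x hx => hx.1)
    obtain ⟨C₂, hC₂⟩ := (isCompact_Icc (a := (0:ℝ)) (b := t₀ + 1)).exists_bound_of_continuousOn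
      (hg₁.mono fun x hx => hx.1)
    have hC₁0 : 0 ≤ C₁ := le_trans (norm_nonneg _) (hC₁ 0 ⟨le_refl _, by linarith⟩)
    have hC₂0 : 0 ≤ C₂ := le_trans (norm_nonneg _) (hC₂ 0 ⟨le_refl _, by linarith⟩)
    apply intervalIntegral.continuousWithinAt_of_dominated_interval
      (bound := fun s => (C₁ * C₂) * ((1 - s) ^ p * s ^ q))
    · exact eventually_mem_nhdsWithin.mono fun t ht => hmeas t ht
    · have hev : ∀ᶠ t in nhdsWithin t₀ (Set.Ici 0), t < t₀ + 1 :=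
        nhdsWithin_le_nhds (eventually_lt_nhds (by linarith))
      filter_upwards [eventually_mem_nhdsWithin, hev] with t ht htlt
      refine Filter.Eventually.of_forall fun s hs => ?_
      rw [hI] at hs
      obtain ⟨hs0, hs1⟩ := hs
      have ht' : (0:ℝ) ≤ t := ht
      have h1s : (0:ℝ) ≤ 1 - s := by linarith
      have hA : (0:ℝ) ≤ (1 - s) ^ p * s ^ q :=
        mul_nonneg (rpow_nonneg h1s p) (rpow_nonneg hs0.le q)
      have harg1 : t * (1 - s) ∈ Set.Icc (0:ℝ) (t₀ + 1) :=
        ⟨mul_nonneg ht h1s, le_trans (by nlinarith [ht']) (le_of_lt htlt)⟩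
      have harg2 : t * s ∈ Set.Icc (0:ℝ) (t₀ + 1) :=
        ⟨mul_nonneg ht hs0.le, le_trans (by nlinarith [ht']) (le_of_lt htlt)⟩
      have hnorm : ‖F t s‖ = ((1 - s) ^ p * s ^ q) * (‖f₁ (t * (1 - s))‖ * ‖g₁ (t * s)‖) := by
        simp only [hF, norm_mul, Real.norm_eq_abs, abs_of_nonneg (rpow_nonneg h1s p),
          abs_of_nonneg (rpow_nonneg hs0.le q)]
      rw [hnorm, mul_comm (C₁ * C₂)]
      refine mul_le_mul_of_nonneg_left ?_ hA
      exact mul_le_mul (hC₁ _ harg1) (hC₂ _ harg2) (norm_nonneg _) hC₁0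
    · exact (beta_integrable_s17 hp hq).const_mul _
    · have h1 : ∀ᵐ s : ℝ, s ≠ (1:ℝ) := by
        rw [MeasureTheory.ae_iff]
        simpa using Real.volume_singleton
      filter_upwards [h1] with s hs1 hs
      rw [hI] at hs
      have hsIoo : s ∈ Set.Ioo (0:ℝ) 1 := ⟨hs.1, lt_of_le_of_ne hs.2 hs1⟩
      have h1s : (0:ℝ) ≤ 1 - s := by linarith [hsIoo.2]
      have hcf : ContinuousWithinAt (fun t : ℝ => f₁ (t * (1 - s))) (Set.Ici 0) t₀ :=
        (hf₁.comp (continuous_mul_right (1 - s)).continuousOn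
          (fun x (hx : x ∈ Set.Ici (0:ℝ)) => mul_nonneg hx h1s)) t₀ ht₀
      have hcg : ContinuousWithinAt (fun t : ℝ => g₁ (t * s)) (Set.Ici 0) t₀ :=
        (hg₁.comp (continuous_mul_right s).continuousOn
          (fun x (hx : x ∈ Set.Ici (0:ℝ)) => mul_nonneg hx hsIoo.1.le)) t₀ ht₀
      exact (continuousWithinAt_const.mul (hcf.mul hcg))
  · -- the change-of-variables formula
    intro t ht
    have hsub := intervalIntegral.integral_comp_mul_right
      (a := (0:ℝ)) (b := 1) (fun τ => f (t - τ) * g τ) ht.ne'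
    simp only [zero_mul, one_mul, smul_eq_mul] at hsub
    have hcongr : (∫ s in (0:ℝ)..1, f (t - s * t) * g (s * t))
        = ∫ s in (0:ℝ)..1, (t ^ p * t ^ q) * F t s := by
      apply intervalIntegral.integral_congr_ae
      have h1 : ∀ᵐ s : ℝ, s ≠ (1:ℝ) := by
        rw [MeasureTheory.ae_iff]
        simpa using Real.volume_singleton
      filter_upwards [h1] with s hs1 hs
      rw [hI] at hs
      have hsIoo : s ∈ Set.Ioo (0:ℝ) 1 := ⟨hs.1, lt_of_le_of_ne hs.2 hs1⟩
      have h1s : (0:ℝ) < 1 - s := by linarith [hsIoo.2]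
      have e1 : t - s * t = t * (1 - s) := by ring
      have e2 : s * t = t * s := by ring
      rw [e1, e2, hf _ (mul_pos ht h1s), hg _ (mul_pos ht hsIoo.1)]
      rw [Real.mul_rpow ht.le h1s.le, Real.mul_rpow ht.le hsIoo.1.le, hF]
      ring
    have : lconv f g t = t * ∫ s in (0:ℝ)..1, f (t - s * t) * g (s * t) := by
      rw [lconv, hsub]
      field_simp
    rw [this, hcongr, intervalIntegral.integral_const_mul]
    rw [Real.rpow_add ht, Real.rpow_add ht, Real.rpow_one]
    ring

/-- the Laplace convolution of two functions from `C_{−1}(0,∞)` is again in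
`C_{−1}(0,∞)`; in particular, the GFI `𝕀_{(κ)} f = κ ∗ f` maps `C_{−1}(0,∞)` into itself. -/
theorem conv_maps_Cm1_to_Cm1
    (f g f₁ g₁ : ℝ → ℝ) (p q : ℝ) (hp : -1 < p) (hq : -1 < q)
    (hf₁ : ContinuousOn f₁ (Set.Ici (0:ℝ))) (hg₁ : ContinuousOn g₁ (Set.Ici (0:ℝ)))
    (hf : ∀ t, 0 < t → f t = t ^ p * f₁ t) (hg : ∀ t, 0 < t → g t = t ^ q * g₁ t) :
    (∃ h : ℝ → ℝ, ContinuousOn h (Set.Ici (0:ℝ)) ∧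
      ∀ t, 0 < t → lconv f g t = t ^ (p + q + 1) * h t) ∧
    (∀ κ F : ℝ → ℝ, InCm1 κ → InCm1 F → InCm1 (lconv κ F)) := by
  constructor
  · exact key hp hq hf₁ hg₁ hf hg
  · rintro κ F ⟨r, κ₁, hr, hκ₁, hκ⟩ ⟨r', F₁, hr', hF₁, hFr⟩
    obtain ⟨h, hcont, heq⟩ := key hr hr' hκ₁ hF₁ hκ hFr
    exact ⟨r + r' + 1, h, by linarith, hcont, heq⟩
end
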